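/- arXiv:1607.04813 — 5 statements merged into one kernel-verified Lean document; each statement's English description precedes it below -/
import Mathlib

section
/- For m ≥ 3 and any integer k with 0 ≤ k ≤ 2^{m-2}, the quantity 2·C(2^m, 4k) + (2^{m+1}-2)·C(2^{m-1}, 2k) is divisible by 2^{m+1}. -/
/-!
Over `ℤ`, `(1 + X)^2 ≡ 1 + X^2 (mod 2)`, and raising a congruence mod `2` to the power `2^t`
upgrades it to a congruence mod `2^(t+1)`. Comparing coefficients of `X^(2j)` in
`(1 + X)^(2^m) ≡ (1 + X^2)^(2^(m-1)) (mod 2^m)` gives `C(2^m, 2j) ≡ C(2^(m-1), j) (mod 2^m)`, and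
the quantity in question is `2 (C(2^m, 4k) - C(2^(m-1), 2k)) + 2^(m+1) C(2^(m-1), 2k)`.
-/

open Polynomial

theorem Polynomial.two_pow_succ_dvd_one_add_X_pow_sub {R : Type*} [CommRing R] (t : ℕ) :
    (2 ^ (t + 1) : R[X]) ∣ (1 + X) ^ 2 ^ (t + 1) - (1 + X ^ 2) ^ 2 ^ t := by
  have h : ((2 : ℕ) : R[X]) ∣ (1 + X) ^ 2 - (1 + X ^ 2) := ⟨X, by push_cast; ring⟩
  simpa [pow_succ', pow_mul] using dvd_sub_pow_of_dvd_sub h t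

theorem Polynomial.coeff_one_add_X_sq_pow_two_mul {R : Type*} [CommSemiring R] (n j : ℕ) :
    ((1 + X ^ 2 : R[X]) ^ n).coeff (2 * j) = n.choose j := by
  have : (1 + X ^ 2 : R[X]) ^ n = expand R 2 ((1 + X) ^ n) := by simp
  rw [this, coeff_expand_mul' two_pos, coeff_one_add_X_pow]

theorem Int.two_pow_dvd_choose_two_pow_sub (m j : ℕ) :
    (2 : ℤ) ^ m ∣ ((2 ^ m).choose (2 * j) : ℤ) - (2 ^ (m - 1)).choose j := by
  cases m with
  | zero => simp
  | succ t =>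
    have h := two_pow_succ_dvd_one_add_X_pow_sub (R := ℤ) t
    rw [show (2 : ℤ[X]) ^ (t + 1) = C (2 ^ (t + 1)) by simp, C_dvd_iff_dvd_coeff] at h
    simpa only [coeff_sub, coeff_one_add_X_pow, coeff_one_add_X_sq_pow_two_mul,
      Nat.add_sub_cancel] using h (2 * j)

theorem rm_weight_formula_integrality_general (m : ℕ) :
    ∀ k : ℕ, k ≤ 2 ^ (m - 2) →
      2 ^ (m + 1) ∣
        2 * (2 ^ m).choose (4 * k) + (2 ^ (m + 1) - 2) * (2 ^ (m - 1)).choose (2 * k) := by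
  intro k _
  obtain ⟨c, hc⟩ := Int.two_pow_dvd_choose_two_pow_sub m (2 * k)
  rw [← mul_assoc] at hc
  have h2 : 2 ≤ 2 ^ (m + 1) := Nat.le_self_pow (by omega) 2
  rw [← Int.natCast_dvd_natCast]
  push_cast [Nat.cast_sub h2]
  exact ⟨c + (2 ^ (m - 1)).choose (2 * k), by linear_combination 2 * hc⟩

/-- For m ≥ 3 and 0 ≤ k ≤ 2^(m-2), the quantity
2·C(2^m, 4k) + (2^(m+1)-2)·C(2^(m-1), 2k) is divisible by 2^(m+1). -/
theorem rm_weight_formula_integrality (m : ℕ) (hm : 3 ≤ m) :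
    ∀ k : ℕ, k ≤ 2 ^ (m - 2) →
      2 ^ (m + 1) ∣
        2 * (2 ^ m).choose (4 * k) + (2 ^ (m + 1) - 2) * (2 ^ (m - 1)).choose (2 * k) :=
  rm_weight_formula_integrality_general m
end

section
/- The supports of the codewords of weight 2^{m-1} in the first-order Reed-Muller code RM(1,m), for m ≥ 3, form a 3-(2^m, 2^{m-1}, 2^{m-2}−1) design. -/
/-!
A block containing three distinct points `x, y, z` is the support of `t ↦ a ⬝ᵥ t + b` with
`a ≠ 0`; containing `x` forces `b = a ⬝ᵥ x + 1`, and containing `y, z` as well means that `a`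
annihilates `y - x` and `z - x`. Over `𝔽₂` three distinct points are affinely independent, so these
`a` form a subspace of codimension 2, with `2 ^ (m - 2)` elements, one of which is `a = 0`;
distinct `a` give distinct blocks.
Both this count and the block size `2 ^ (m - 1)` are instances of counting the solutions of a
linear system with independent equations over a finite field.
-/

open Finset Matrix

lemma ZMod.eq_zero_or_eq_one_of_two (c : ZMod 2) : c = 0 ∨ c = 1 := by
  revert c
  decide

theorem Matrix.card_filter_mulVec_eq {K ι n : Type*} [Field K] [Fintype K] [DecidableEq K]
    [Fintype ι] [Fintype n] [DecidableEq n] {A : Matrix ι n K} (hA : LinearIndependent K A.row)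
    (w : ι → K) :
    #{x | A *ᵥ x = w} = Fintype.card K ^ (Fintype.card n - Fintype.card ι) := by
  have hrange : LinearMap.range A.mulVecLin = ⊤ := by
    apply Submodule.eq_top_of_finrank_eq
    rw [← Matrix.rank, hA.rank_matrix, Module.finrank_fintype_fun_eq_card]
  have hker := A.mulVecLin.finrank_range_add_finrank_ker
  rw [hrange, finrank_top, Module.finrank_fintype_fun_eq_card,
    Module.finrank_fintype_fun_eq_card] at hker
  calc #{x | A *ᵥ x = w}
      = #{x | A *ᵥ x = 0} := AddMonoidHom.card_fiber_eq_of_mem_range A.mulVecLin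
          (LinearMap.range_eq_top.mp hrange w) ⟨0, map_zero _⟩
    _ = Nat.card (LinearMap.ker A.mulVecLin) := by
      rw [← Nat.card_eq_finsetCard]
      exact Nat.card_congr (Equiv.subtypeEquivRight fun x => by simp)
    _ = _ := by
      rw [Module.natCard_eq_pow_finrank (K := K), Nat.card_eq_fintype_card, ← hker,
        Nat.add_sub_cancel_left]

theorem linearIndependent_pair_sub_of_ne {V : Type*} [AddCommGroup V] [Module (ZMod 2) V]
    {x y z : V} (hxy : x ≠ y) (hxz : x ≠ z) (hyz : y ≠ z) :
    LinearIndependent (ZMod 2) ![y - x, z - x] := by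
  have hvv (v : V) : v + v = 0 := by
    rw [← two_smul (ZMod 2), show (2 : ZMod 2) = 0 from rfl, zero_smul]
  rw [LinearIndependent.pair_iff]
  intro s t hst
  obtain rfl | rfl := ZMod.eq_zero_or_eq_one_of_two s <;>
    obtain rfl | rfl := ZMod.eq_zero_or_eq_one_of_two t <;>
    simp only [zero_smul, one_smul, zero_add, add_zero, sub_eq_zero] at hst
  · exact ⟨rfl, rfl⟩
  · exact absurd hst.symm hxz
  · exact absurd hst.symm hxy
  · refine absurd ?_ hyz
    rw [← sub_eq_zero]
    calc y - z = (y - x + (z - x)) + (x + x) - (z + z) := by abel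
      _ = 0 := by rw [hst, hvv x, hvv z, zero_add, sub_zero]

section AffineSupport

variable {n : Type*} [Fintype n] [DecidableEq n]

def affineSupport (a : n → ZMod 2) (b : ZMod 2) : Finset (n → ZMod 2) :=
  {x | a ⬝ᵥ x + b ≠ 0}

lemma mem_affineSupport {a x : n → ZMod 2} {b : ZMod 2} :
    x ∈ affineSupport a b ↔ a ⬝ᵥ x = b + 1 := by
  rw [affineSupport, mem_filter_univ]
  generalize a ⬝ᵥ x = c
  revert b c
  decide

lemma affineSupport_inj {a a' : n → ZMod 2} {b b' : ZMod 2} :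
    affineSupport a b = affineSupport a' b' ↔ a = a' ∧ b = b' := by
  refine ⟨fun h => ?_, by rintro ⟨rfl, rfl⟩; rfl⟩
  have hval (x : n → ZMod 2) : a ⬝ᵥ x + b = a' ⬝ᵥ x + b' := by
    have hx : x ∈ affineSupport a b ↔ x ∈ affineSupport a' b' := by rw [h]
    rw [mem_affineSupport, mem_affineSupport] at hx
    have key : ∀ b b' c c' : ZMod 2, (c = b + 1 ↔ c' = b' + 1) → c + b = c' + b' := by decide
    exact key _ _ _ _ hx
  have hb : b = b' := by simpa using hval 0
  refine ⟨funext fun i => ?_, hb⟩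
  simpa [hb] using hval (Pi.single i 1)

lemma card_affineSupport_of_ne_zero {a : n → ZMod 2} (ha : a ≠ 0) (b : ZMod 2) :
    #(affineSupport a b) = 2 ^ (Fintype.card n - 1) := by
  have hrow : LinearIndependent (ZMod 2) (of ![a]).row := by
    simpa [linearIndependent_unique_iff] using ha
  have hcount := card_filter_mulVec_eq hrow ![b + 1]
  rw [ZMod.card, Fintype.card_fin] at hcount
  rw [← hcount]
  congr 1
  ext x
  simp [mem_affineSupport, funext_iff]

lemma card_affineSupport_eq_iff [Nonempty n] {a : n → ZMod 2} {b : ZMod 2} :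
    #(affineSupport a b) = 2 ^ (Fintype.card n - 1) ↔ a ≠ 0 := by
  refine ⟨?_, fun ha => card_affineSupport_of_ne_zero ha b⟩
  rintro hcard rfl
  obtain rfl | rfl := ZMod.eq_zero_or_eq_one_of_two b
  · simp only [affineSupport, zero_dotProduct, add_zero, ne_eq, not_true_eq_false, filter_false,
      card_empty] at hcard
    exact absurd hcard.symm (by positivity)
  · have : Fintype.card n = Fintype.card n - 1 := by simpa [affineSupport] using hcard
    have hpos := Fintype.card_pos (α := n)
    omega

lemma insert_subset_affineSupport_iff {x y z a : n → ZMod 2} {b : ZMod 2} :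
    {x, y, z} ⊆ affineSupport a b ↔ b = a ⬝ᵥ x + 1 ∧ of ![y - x, z - x] *ᵥ a = 0 := by
  have key : ∀ b c d e : ZMod 2,
      (c = b + 1 ∧ d = b + 1 ∧ e = b + 1) ↔ (b = c + 1 ∧ d - c = 0 ∧ e - c = 0) := by decide
  simp only [insert_subset_iff, singleton_subset_iff, mem_affineSupport, cons_mulVec, empty_mulVec,
    cons_eq_zero_iff, zero_empty, and_true, dotProduct_comm _ a, dotProduct_sub]
  exact key _ _ _ _

lemma exists_affineSupport_and_subset_iff [Nonempty n] {x y z : n → ZMod 2}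
    {S : Finset (n → ZMod 2)} :
    ((∃ a b, S = affineSupport a b ∧ #S = 2 ^ (Fintype.card n - 1)) ∧ {x, y, z} ⊆ S) ↔
      S ∈ (({a | of ![y - x, z - x] *ᵥ a = 0} : Finset _).erase 0).image
        fun a => affineSupport a (a ⬝ᵥ x + 1) := by
  simp only [mem_image, mem_erase, mem_filter_univ]
  constructor
  · rintro ⟨⟨a, b, rfl, hcard⟩, hsub⟩
    obtain ⟨rfl, hdir⟩ := insert_subset_affineSupport_iff.mp hsub
    exact ⟨a, ⟨card_affineSupport_eq_iff.mp hcard, hdir⟩, rfl⟩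
  · rintro ⟨a, ⟨ha, hdir⟩, rfl⟩
    exact ⟨⟨a, _, rfl, card_affineSupport_of_ne_zero ha _⟩,
      insert_subset_affineSupport_iff.mpr ⟨rfl, hdir⟩⟩

end AffineSupport

theorem rm1_supports_form_3design_general (m : ℕ) :
    ∀ T : Finset (Fin m → ZMod 2), T.card = 3 →
      Nat.card {S : Finset (Fin m → ZMod 2) //
          (∃ (a : Fin m → ZMod 2) (b : ZMod 2),
            S = Finset.univ.filter (fun x => (∑ i, a i * x i) + b ≠ 0) ∧
            S.card = 2 ^ (m - 1)) ∧ T ⊆ S} =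
        2 ^ (m - 2) - 1 := by
  intro T hT
  obtain ⟨x, y, z, hxy, hxz, hyz, rfl⟩ := card_eq_three.mp hT
  have : Nonempty (Fin m) := not_isEmpty_iff.mp fun _ => hxy (Subsingleton.elim x y)
  have hblocks (S : Finset (Fin m → ZMod 2)) :=
    Fintype.card_fin m ▸ exists_affineSupport_and_subset_iff (x := x) (y := y) (z := z) (S := S)
  refine (Nat.card_congr (Equiv.subtypeEquivRight hblocks)).trans ?_
  rw [Nat.card_eq_finsetCard, card_image_of_injective _ fun a a' h => (affineSupport_inj.mp h).1,
    card_erase_of_mem (by simp),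
    card_filter_mulVec_eq (A := of ![y - x, z - x]) (linearIndependent_pair_sub_of_ne hxy hxz hyz),
    ZMod.card, Fintype.card_fin, Fintype.card_fin]

/-- For m ≥ 3, the supports of the codewords of weight 2^(m-1) in the first-order
Reed-Muller code RM(1,m) (the evaluations of affine functions a·x + b on GF(2)^m)
form a 3-(2^m, 2^(m-1), 2^(m-2)−1) design. -/
theorem rm1_supports_form_3design (m : ℕ) (hm : 3 ≤ m) :
    ∀ T : Finset (Fin m → ZMod 2), T.card = 3 →
      Nat.card {S : Finset (Fin m → ZMod 2) //
          (∃ (a : Fin m → ZMod 2) (b : ZMod 2),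
            S = Finset.univ.filter (fun x => (∑ i, a i * x i) + b ≠ 0) ∧
            S.card = 2 ^ (m - 1)) ∧ T ⊆ S} =
        2 ^ (m - 2) - 1 :=
  rm1_supports_form_3design_general m
end

section
/- Let m ≥ 4. The number of codewords of weight 6 in the binary Hamming code of length 2^m−1 equals (2^{m-1}-1)(2^{m-1}-2)(2^{m-1}-3)(2^{m-1}-4)(2^m-1)/45. -/
open Finset Polynomial

namespace HammingAux

/-- sign character on `ZMod 2`. -/
def χ (a : ZMod 2) : ℤ := if a = 0 then 1 else -1

lemma χ_zero : χ 0 = 1 := rfl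

lemma χ_one : χ 1 = -1 := rfl

lemma χ_add (a b : ZMod 2) : χ (a + b) = χ a * χ b := by revert a b; decide

lemma χ_sum {ι : Type*} (s : Finset ι) (f : ι → ZMod 2) :
    χ (∑ i ∈ s, f i) = ∏ i ∈ s, χ (f i) := by
  classical
  induction s using Finset.induction_on with
  | empty => simp [χ]
  | @insert a s h ih => rw [Finset.sum_insert h, Finset.prod_insert h, χ_add, ih]

lemma coeff_one_sub_X_pow (a k : ℕ) :
    ((1 - X : Polynomial ℤ) ^ a).coeff k = (-1) ^ k * a.choose k := by
  induction a generalizing k with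
  | zero =>
    rcases k with _ | k <;> simp [Polynomial.coeff_one]
  | succ a ih =>
    have : ((1 - X : Polynomial ℤ)) ^ (a + 1) = (1 - X) ^ a - (1 - X) ^ a * X := by ring
    rw [this, Polynomial.coeff_sub]
    rcases k with _ | k
    · simp [ih]
    · rw [Polynomial.coeff_mul_X, ih, ih, Nat.choose_succ_succ' ]
      push_cast
      ring

lemma key {ι : Type*} [DecidableEq ι] (u A : Finset ι) (hA : A ⊆ u) (w : ℕ) :
    ∑ S ∈ u.powersetCard w, ∏ i ∈ S, (if i ∈ A then (-1 : ℤ) else 1)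
      = ∑ i ∈ range (w + 1),
          (-1) ^ i * (A.card.choose i : ℤ) * ((u.card - A.card).choose (w - i)) := by
  set ε : ι → ℤ := fun i => if i ∈ A then (-1 : ℤ) else 1 with hε
  have hprod : ∏ i ∈ u, (C (ε i) * X + 1)
      = (1 + X) ^ (u.card - A.card) * (1 - X) ^ A.card := by
    rw [← Finset.prod_sdiff hA]
    have h1 : ∏ i ∈ A, (C (ε i) * X + 1) = (1 - X) ^ A.card := by
      rw [Finset.prod_congr rfl (g := fun _ => 1 - X) fun i hi => by
        simp [hε, if_pos hi]; ring, Finset.prod_const]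
    have h2 : ∏ i ∈ u \ A, (C (ε i) * X + 1) = (1 + X) ^ (u.card - A.card) := by
      rw [Finset.prod_congr rfl (g := fun _ => 1 + X) fun i hi => by
        simp [hε, if_neg (Finset.mem_sdiff.mp hi).2]; ring, Finset.prod_const,
        Finset.card_sdiff_of_subset hA]
    rw [h1, h2]
  have lhs : (∏ i ∈ u, (C (ε i) * X + 1)).coeff w
      = ∑ S ∈ u.powersetCard w, ∏ i ∈ S, ε i := by
    rw [Finset.prod_add, Polynomial.finset_sum_coeff]
    have hterm : ∀ t ∈ u.powerset,
        ((∏ i ∈ t, (C (ε i) * X)) * ∏ _i ∈ u \ t, (1 : Polynomial ℤ)).coeff w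
          = if t.card = w then ∏ i ∈ t, ε i else 0 := by
      intro t _
      rw [Finset.prod_const_one, mul_one, Finset.prod_mul_distrib, Finset.prod_const,
        ← map_prod, Polynomial.coeff_C_mul, Polynomial.coeff_X_pow]
      simp [eq_comm]
    rw [Finset.sum_congr rfl hterm, ← Finset.sum_filter, Finset.powersetCard_eq_filter]
  have rhs : (((1 + X) ^ (u.card - A.card) * (1 - X) ^ A.card : Polynomial ℤ)).coeff w
      = ∑ i ∈ range (w + 1),
          (-1) ^ i * (A.card.choose i : ℤ) * ((u.card - A.card).choose (w - i)) := by
    rw [mul_comm, Polynomial.coeff_mul, Finset.Nat.sum_antidiagonal_eq_sum_range_succ_mk]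
    refine Finset.sum_congr rfl fun i _ => ?_
    rw [coeff_one_sub_X_pow, Polynomial.coeff_one_add_X_pow]
    try push_cast
    try ring
  rw [← lhs, hprod, rhs]

lemma zmod2_cases (z : ZMod 2) : z = 0 ∨ z = 1 := by revert z; decide

lemma zmod2_ne_zero {z : ZMod 2} (h : z ≠ 0) : z = 1 := by
  rcases zmod2_cases z with h0 | h1
  · exact absurd h0 h
  · exact h1

lemma sphere_sum {N w : ℕ} (x : Fin N → ZMod 2) :
    ∑ c ∈ univ.filter (fun c : Fin N → ZMod 2 => (univ.filter fun i => c i ≠ 0).card = w),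
        χ (∑ i, x i * c i)
      = ∑ i ∈ range (w + 1),
          (-1 : ℤ) ^ i * ((univ.filter fun i => x i ≠ 0).card.choose i) *
            ((N - (univ.filter fun i => x i ≠ 0).card).choose (w - i)) := by
  classical
  set A : Finset (Fin N) := univ.filter fun i => x i ≠ 0 with hA
  have step1 : ∑ c ∈ univ.filter
        (fun c : Fin N → ZMod 2 => (univ.filter fun i => c i ≠ 0).card = w),
        χ (∑ i, x i * c i)
      = ∑ S ∈ (univ : Finset (Fin N)).powersetCard w,
          ∏ i ∈ S, (if i ∈ A then (-1 : ℤ) else 1) := by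
    refine Finset.sum_nbij' (i := fun c => univ.filter fun i => c i ≠ 0)
      (j := fun S i => if i ∈ S then (1 : ZMod 2) else 0) ?_ ?_ ?_ ?_ ?_
    · intro c hc
      simp only [Finset.mem_filter, Finset.mem_univ, true_and] at hc
      simp [Finset.mem_powersetCard, hc]
    · intro S hS
      simp only [Finset.mem_powersetCard] at hS
      simp only [Finset.mem_filter, Finset.mem_univ, true_and]
      rw [← hS.2]
      congr 1
      ext i
      by_cases hi : i ∈ S <;> simp [hi]
    · intro c _
      funext i
      by_cases hi : c i = 0
      · simp [hi]
      · simp only [Finset.mem_filter, Finset.mem_univ, true_and, ne_eq, hi, not_false_iff,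
          if_true]
        exact (zmod2_ne_zero hi).symm
    · intro S _
      ext i
      by_cases hi : i ∈ S <;> simp [hi]
    · intro c hc
      have hsum : ∑ i, x i * c i = ∑ i ∈ univ.filter fun i => c i ≠ 0, x i := by
        rw [← Finset.sum_filter_of_ne (p := fun i => c i ≠ 0)
          (by intro i _ h hci; exact h (by rw [hci, mul_zero]))]
        refine Finset.sum_congr rfl fun i hi => ?_
        rw [zmod2_ne_zero (Finset.mem_filter.mp hi).2, mul_one]
      rw [hsum, χ_sum]
      refine Finset.prod_congr rfl fun i _ => ?_
      by_cases hxi : x i = 0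
      · simp [χ, hxi, hA]
      · simp [χ, hxi, hA]
  rw [step1, key (univ : Finset (Fin N)) A (Finset.subset_univ A) w, hA]
  simp [Finset.card_univ]

lemma cast_descFactorial_eq (b : ℕ) : ∀ k : ℕ, k ≤ b + 1 →
    (b.descFactorial k : ℚ) = ∏ i ∈ range k, ((b : ℚ) - i) := by
  intro k
  induction k with
  | zero => simp
  | succ k ih =>
    intro hk
    rw [Nat.descFactorial_succ, Finset.prod_range_succ, ← ih (by omega), Nat.cast_mul,
      Nat.cast_sub (by omega)]
    ring

lemma cast_choose_eq (b k : ℕ) (h : k ≤ b) :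
    (b.choose k : ℚ) = (∏ i ∈ range k, ((b : ℚ) - i)) / k.factorial := by
  rw [eq_div_iff (by exact_mod_cast k.factorial_ne_zero), ← cast_descFactorial_eq b k (by omega)]
  rw [Nat.descFactorial_eq_factorial_mul_choose]
  push_cast
  ring

end HammingAux

open Finset HammingAux

/-- Let m ≥ 4. The number of codewords of weight 6 in the binary Hamming code of
length 2^m-1 (whose dual has weight enumerator 1+(2^m-1)z^(2^(m-1))) equals
(2^(m-1)-1)(2^(m-1)-2)(2^(m-1)-3)(2^(m-1)-4)(2^m-1)/45. -/
theorem binary_hamming_weight6_count (m : ℕ) (hm : 4 ≤ m)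
    (C : Submodule (ZMod 2) (Fin (2 ^ m - 1) → ZMod 2))
    (hdual : ∀ w : ℕ,
      Nat.card {x : Fin (2 ^ m - 1) → ZMod 2 //
          (∀ c ∈ C, ∑ i, x i * c i = 0) ∧
          (Finset.univ.filter (fun i => x i ≠ 0)).card = w} =
        if w = 0 then 1 else if w = 2 ^ (m - 1) then 2 ^ m - 1 else 0) :
    45 * Nat.card {c : Fin (2 ^ m - 1) → ZMod 2 // c ∈ C ∧
        (Finset.univ.filter (fun i => c i ≠ 0)).card = 6} =
      (2 ^ (m - 1) - 1) * (2 ^ (m - 1) - 2) * (2 ^ (m - 1) - 3) * (2 ^ (m - 1) - 4) *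
        (2 ^ m - 1) := by
  classical
  obtain ⟨a, ha⟩ : ∃ a, 2 ^ (m - 1) = a + 8 := by
    refine ⟨2 ^ (m - 1) - 8, ?_⟩
    have : 2 ^ 3 ≤ 2 ^ (m - 1) := Nat.pow_le_pow_right (by norm_num) (by omega)
    omega
  have hm2 : 2 ^ m = 2 * 2 ^ (m - 1) := by
    rw [← pow_succ']
    congr 1
    omega
  have hN : 2 ^ m - 1 = 2 * a + 15 := by omega
  have e00 : 2 ^ m - 1 - 0 = 2 * a + 15 := by omega
  have e01 : 2 ^ m - 1 - (a + 8) = a + 7 := by omega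
  have e1 : 2 ^ (m - 1) - 1 = a + 7 := by omega
  have e2 : 2 ^ (m - 1) - 2 = a + 6 := by omega
  have e3 : 2 ^ (m - 1) - 3 = a + 5 := by omega
  have e4 : 2 ^ (m - 1) - 4 = a + 4 := by omega
  have h615 : 6 ≤ 2 * a + 15 := by omega
  have h68 : 6 ≤ a + 8 := by omega
  have h67 : 6 ≤ a + 7 := by omega
  -- fiber cardinalities of the dual code
  have hfiber : ∀ w : ℕ,
      ((univ.filter fun x : Fin (2 ^ m - 1) → ZMod 2 =>
          (∀ c ∈ C, ∑ i, x i * c i = 0) ∧ (univ.filter fun i => x i ≠ 0).card = w)).card =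
        if w = 0 then 1 else if w = 2 ^ (m - 1) then 2 ^ m - 1 else 0 := by
    intro w
    rw [← hdual w, Nat.card_eq_fintype_card, Fintype.card_subtype]
  have hwt_mem : ∀ x : Fin (2 ^ m - 1) → ZMod 2,
      (univ.filter fun i => x i ≠ 0).card ∈ range (2 ^ m - 1 + 1) := by
    intro x
    refine mem_range.mpr (Nat.lt_succ_of_le ?_)
    calc (univ.filter fun i => x i ≠ 0).card ≤ (univ : Finset (Fin (2 ^ m - 1))).card :=
          Finset.card_filter_le _ _
      _ = 2 ^ m - 1 := by simp
  -- weighted sums over the dual code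
  have hsumD : ∀ g : ℕ → ℤ,
      ∑ x ∈ univ.filter (fun x : Fin (2 ^ m - 1) → ZMod 2 => ∀ c ∈ C, ∑ i, x i * c i = 0),
          g ((univ.filter fun i => x i ≠ 0).card)
        = g 0 + (2 * a + 15) * g (2 ^ (m - 1)) := by
    intro g
    rw [← Finset.sum_fiberwise_of_maps_to' (t := range (2 ^ m - 1 + 1))
      (fun x _ => hwt_mem x) g]
    have hinner : ∀ w ∈ range (2 ^ m - 1 + 1),
        (∑ _x ∈ (univ.filter (fun x : Fin (2 ^ m - 1) → ZMod 2 =>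
            ∀ c ∈ C, ∑ i, x i * c i = 0)).filter
            (fun x => (univ.filter fun i => x i ≠ 0).card = w), g w)
          = (if w = 0 then g w else 0) + (if w = 2 ^ (m - 1) then (2 * a + 15) * g w else 0) := by
      intro w _
      rw [Finset.sum_const, Finset.filter_filter, hfiber w]
      by_cases h0 : w = 0
      · have hne : ¬ w = 2 ^ (m - 1) := by omega
        rw [if_pos h0, if_pos h0, if_neg hne]
        simp
      · by_cases h1 : w = 2 ^ (m - 1)
        · rw [if_neg h0, if_pos h1, if_neg h0, if_pos h1, hN, zero_add]
          push_cast [nsmul_eq_mul]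
          ring
        · simp [h0, h1]
    rw [Finset.sum_congr rfl hinner, Finset.sum_add_distrib,
      Finset.sum_ite_eq' (range (2 ^ m - 1 + 1)) 0 g,
      Finset.sum_ite_eq' (range (2 ^ m - 1 + 1)) (2 ^ (m - 1))
        (fun w => (2 * a + 15) * g w)]
    rw [if_pos (by simp), if_pos (by rw [mem_range]; omega)]
  -- cardinality of the dual code
  have hcardD : (univ.filter (fun x : Fin (2 ^ m - 1) → ZMod 2 =>
      ∀ c ∈ C, ∑ i, x i * c i = 0)).card = 2 * a + 16 := by
    have h1 := hsumD (fun _ => (1 : ℤ))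
    simp only [Finset.sum_const, nsmul_eq_mul, mul_one] at h1
    have h2 : ((1 : ℤ) + (2 * a + 15)) = ((2 * a + 16 : ℕ) : ℤ) := by push_cast; ring
    exact_mod_cast h1.trans h2
  -- bilinear form machinery : C is the orthogonal of its orthogonal
  set B : LinearMap.BilinForm (ZMod 2) (Fin (2 ^ m - 1) → ZMod 2) :=
    Matrix.toBilin' 1 with hB
  have hBapp : ∀ x y : Fin (2 ^ m - 1) → ZMod 2, B x y = ∑ i, x i * y i := by
    intro x y
    rw [hB, Matrix.toBilin'_apply']
    simp [dotProduct, Matrix.one_mulVec]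
  have hrefl : B.IsRefl := by
    intro x y hxy
    rw [hBapp] at hxy ⊢
    rw [← hxy]
    exact Finset.sum_congr rfl fun i _ => mul_comm _ _
  have hnd : B.Nondegenerate :=
    Matrix.Nondegenerate.toBilin' (Matrix.nondegenerate_of_det_ne_zero (by simp))
  have hmemD : ∀ x : Fin (2 ^ m - 1) → ZMod 2,
      (∀ c ∈ C, ∑ i, x i * c i = 0) ↔ x ∈ B.orthogonal C := by
    intro x
    rw [LinearMap.BilinForm.mem_orthogonal_iff]
    constructor
    · intro h n hn
      rw [hBapp, ← h n hn]
      exact Finset.sum_congr rfl fun i _ => mul_comm _ _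
    · intro h c hc
      have h2 := h c hc
      rw [hBapp] at h2
      rw [← h2]
      exact Finset.sum_congr rfl fun i _ => mul_comm _ _
  have hCmem : ∀ c : Fin (2 ^ m - 1) → ZMod 2, c ∈ C ↔
      ∀ x : Fin (2 ^ m - 1) → ZMod 2,
        (∀ c' ∈ C, ∑ i, x i * c' i = 0) → ∑ i, x i * c i = 0 := by
    intro c
    conv_lhs => rw [← LinearMap.BilinForm.orthogonal_orthogonal hnd hrefl C]
    rw [LinearMap.BilinForm.mem_orthogonal_iff]
    constructor
    · intro h x hx
      have h2 := h x ((hmemD x).mp hx)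
      rwa [hBapp] at h2
    · intro h x hx
      rw [hBapp]
      exact h x ((hmemD x).mpr hx)
  -- orthogonality character sums
  have horth : ∀ c : Fin (2 ^ m - 1) → ZMod 2,
      (∑ x ∈ univ.filter (fun x : Fin (2 ^ m - 1) → ZMod 2 => ∀ c' ∈ C, ∑ i, x i * c' i = 0),
          χ (∑ i, x i * c i))
        = if c ∈ C then (2 * a + 16 : ℤ) else 0 := by
    intro c
    by_cases hc : c ∈ C
    · rw [if_pos hc, Finset.sum_congr rfl (g := fun _ => (1 : ℤ)) (fun x hx => by
        rw [(Finset.mem_filter.mp hx).2 c hc, χ_zero]), Finset.sum_const, hcardD]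
      push_cast
      ring
    · rw [if_neg hc]
      obtain ⟨x0, hx0P, hx0c⟩ : ∃ x0 : Fin (2 ^ m - 1) → ZMod 2,
          (∀ c' ∈ C, ∑ i, x0 i * c' i = 0) ∧ ∑ i, x0 i * c i ≠ 0 := by
        by_contra hcon
        push_neg at hcon
        exact hc ((hCmem c).mpr hcon)
      have hx0c1 : ∑ i, x0 i * c i = 1 := zmod2_ne_zero hx0c
      have hflip : ∑ x ∈ univ.filter (fun x : Fin (2 ^ m - 1) → ZMod 2 =>
            ∀ c' ∈ C, ∑ i, x i * c' i = 0), χ (∑ i, x i * c i)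
          = ∑ x ∈ univ.filter (fun x : Fin (2 ^ m - 1) → ZMod 2 =>
            ∀ c' ∈ C, ∑ i, x i * c' i = 0), χ ((∑ i, x i * c i) + 1) := by
        have hself : ∀ y : Fin (2 ^ m - 1) → ZMod 2, y + y = 0 := by
          intro y
          funext i
          have : ∀ z : ZMod 2, z + z = 0 := by decide
          exact this (y i)
        refine Finset.sum_nbij' (i := fun x => x + x0) (j := fun x => x + x0) ?_ ?_ ?_ ?_ ?_
        · intro x hx
          simp only [Finset.mem_filter, Finset.mem_univ, true_and] at hx ⊢
          intro c' hc'
          have : ∑ i, (x i + x0 i) * c' i = (∑ i, x i * c' i) + ∑ i, x0 i * c' i := by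
            rw [← Finset.sum_add_distrib]
            exact Finset.sum_congr rfl fun i _ => add_mul _ _ _
          rw [show (fun i => (x + x0) i * c' i) = fun i => (x i + x0 i) * c' i from rfl] at *
          rw [this, hx c' hc', hx0P c' hc', add_zero]
        · intro x hx
          simp only [Finset.mem_filter, Finset.mem_univ, true_and] at hx ⊢
          intro c' hc'
          have : ∑ i, (x i + x0 i) * c' i = (∑ i, x i * c' i) + ∑ i, x0 i * c' i := by
            rw [← Finset.sum_add_distrib]
            exact Finset.sum_congr rfl fun i _ => add_mul _ _ _
          rw [show (fun i => (x + x0) i * c' i) = fun i => (x i + x0 i) * c' i from rfl] at *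
          rw [this, hx c' hc', hx0P c' hc', add_zero]
        · intro x _
          show x + x0 + x0 = x
          rw [add_assoc, hself x0, add_zero]
        · intro x _
          show x + x0 + x0 = x
          rw [add_assoc, hself x0, add_zero]
        · intro x _
          congr 1
          have : ∑ i, (x i + x0 i) * c i = (∑ i, x i * c i) + ∑ i, x0 i * c i := by
            rw [← Finset.sum_add_distrib]
            exact Finset.sum_congr rfl fun i _ => add_mul _ _ _
          rw [show (fun i => (x + x0) i * c i) = fun i => (x i + x0 i) * c i from rfl]
          rw [this, hx0c1, add_assoc, show (1 : ZMod 2) + 1 = 0 from rfl, add_zero]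
      have : ∀ x : Fin (2 ^ m - 1) → ZMod 2,
          χ ((∑ i, x i * c i) + 1) = - χ (∑ i, x i * c i) := by
        intro x
        rw [χ_add, χ_one]
        ring
      rw [Finset.sum_congr rfl (fun x _ => this x), Finset.sum_neg_distrib] at hflip
      linarith [hflip]
  clear_value B
  -- the sphere character sums
  have hsphere : ∀ x : Fin (2 ^ m - 1) → ZMod 2,
      ∑ c ∈ univ.filter (fun c : Fin (2 ^ m - 1) → ZMod 2 =>
          (univ.filter fun i => c i ≠ 0).card = 6), χ (∑ i, x i * c i)
        = ∑ i ∈ range (6 + 1),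
            (-1 : ℤ) ^ i * (((univ.filter fun i => x i ≠ 0).card).choose i : ℤ) *
              (((2 ^ m - 1 - (univ.filter fun i => x i ≠ 0).card)).choose (6 - i) : ℤ) :=
    fun x => sphere_sum (w := 6) x
  -- MacWilliams-style identity
  have hmac : (2 * (a : ℤ) + 16) *
      ((univ.filter (fun c : Fin (2 ^ m - 1) → ZMod 2 =>
          c ∈ C ∧ (univ.filter fun i => c i ≠ 0).card = 6)).card : ℤ)
      = (∑ i ∈ range (6 + 1), (-1 : ℤ) ^ i * ((0).choose i : ℤ) *
            ((2 ^ m - 1 - 0).choose (6 - i) : ℤ))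
        + (2 * a + 15) * ∑ i ∈ range (6 + 1),
            (-1 : ℤ) ^ i * ((2 ^ (m - 1)).choose i : ℤ) *
              ((2 ^ m - 1 - 2 ^ (m - 1)).choose (6 - i) : ℤ) := by
    have hswap := Finset.sum_comm
      (s := univ.filter (fun c : Fin (2 ^ m - 1) → ZMod 2 =>
        (univ.filter fun i => c i ≠ 0).card = 6))
      (t := univ.filter (fun x : Fin (2 ^ m - 1) → ZMod 2 => ∀ c' ∈ C, ∑ i, x i * c' i = 0))
      (f := fun c x => χ (∑ i, x i * c i))
    have hL : ∑ c ∈ univ.filter (fun c : Fin (2 ^ m - 1) → ZMod 2 =>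
          (univ.filter fun i => c i ≠ 0).card = 6),
        ∑ x ∈ univ.filter (fun x : Fin (2 ^ m - 1) → ZMod 2 =>
          ∀ c' ∈ C, ∑ i, x i * c' i = 0), χ (∑ i, x i * c i)
        = (2 * (a : ℤ) + 16) *
          ((univ.filter (fun c : Fin (2 ^ m - 1) → ZMod 2 =>
            c ∈ C ∧ (univ.filter fun i => c i ≠ 0).card = 6)).card : ℤ) := by
      rw [Finset.sum_congr rfl (fun c _ => horth c), ← Finset.sum_filter, Finset.sum_const,
        Finset.filter_filter]
      rw [show (univ.filter fun c : Fin (2 ^ m - 1) → ZMod 2 =>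
          (univ.filter fun i => c i ≠ 0).card = 6 ∧ c ∈ C)
        = univ.filter (fun c : Fin (2 ^ m - 1) → ZMod 2 =>
          c ∈ C ∧ (univ.filter fun i => c i ≠ 0).card = 6) from by
        apply Finset.filter_congr
        intro c _
        exact and_comm]
      rw [nsmul_eq_mul]
      ring
    have hR : ∑ x ∈ univ.filter (fun x : Fin (2 ^ m - 1) → ZMod 2 =>
          ∀ c' ∈ C, ∑ i, x i * c' i = 0),
        ∑ c ∈ univ.filter (fun c : Fin (2 ^ m - 1) → ZMod 2 =>
          (univ.filter fun i => c i ≠ 0).card = 6), χ (∑ i, x i * c i)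
        = (∑ i ∈ range (6 + 1), (-1 : ℤ) ^ i * ((0).choose i : ℤ) *
              ((2 ^ m - 1 - 0).choose (6 - i) : ℤ))
          + (2 * a + 15) * ∑ i ∈ range (6 + 1),
              (-1 : ℤ) ^ i * ((2 ^ (m - 1)).choose i : ℤ) *
                ((2 ^ m - 1 - 2 ^ (m - 1)).choose (6 - i) : ℤ) := by
      rw [Finset.sum_congr rfl (fun x _ => hsphere x)]
      exact hsumD (fun j => ∑ i ∈ range (6 + 1),
        (-1 : ℤ) ^ i * ((j).choose i : ℤ) * ((2 ^ m - 1 - j).choose (6 - i) : ℤ))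
    rw [← hL, hswap, hR]
  -- evaluate the two Krawtchouk sums
  have hg0 : (∑ i ∈ range (6 + 1), (-1 : ℤ) ^ i * ((0).choose i : ℤ) *
      ((2 ^ m - 1 - 0).choose (6 - i) : ℤ)) = (((2 * a + 15).choose 6 : ℕ) : ℤ) := by
    rw [e00]
    rw [Finset.sum_range_succ']
    simp only [Nat.choose_zero_succ, Nat.cast_zero, mul_zero, zero_mul, Finset.sum_const_zero,
      zero_add, pow_zero, Nat.choose_zero_right, Nat.cast_one, one_mul, Nat.sub_zero]
  have hgh : (∑ i ∈ range (6 + 1), (-1 : ℤ) ^ i * ((2 ^ (m - 1)).choose i : ℤ) *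
        ((2 ^ m - 1 - 2 ^ (m - 1)).choose (6 - i) : ℤ))
      = ∑ i ∈ range (6 + 1), (-1 : ℤ) ^ i * (((a + 8).choose i : ℕ) : ℤ) *
          (((a + 7).choose (6 - i) : ℕ) : ℤ) := by
    rw [ha, e01]
  rw [hg0, hgh] at hmac
  -- finish by rational arithmetic
  rw [Nat.card_eq_fintype_card, Fintype.card_subtype]
  rw [e1, e2, e3, e4]
  conv_rhs => rw [hN]
  have harith : (45 : ℚ) * ((((2 * a + 15).choose 6 : ℕ) : ℚ)
      + (2 * a + 15) * ∑ i ∈ range (6 + 1), (-1 : ℚ) ^ i * (((a + 8).choose i : ℕ) : ℚ) *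
          (((a + 7).choose (6 - i) : ℕ) : ℚ))
      = (2 * a + 16) * ((a + 7) * (a + 6) * (a + 5) * (a + 4) * (2 * a + 15)) := by
    rw [Finset.sum_range_succ, Finset.sum_range_succ, Finset.sum_range_succ,
      Finset.sum_range_succ, Finset.sum_range_succ, Finset.sum_range_succ,
      Finset.sum_range_succ, Finset.sum_range_zero]
    norm_num
    rw [cast_choose_eq (2 * a + 15) 6 h615,
      cast_choose_eq (a + 8) 2 (le_trans (by norm_num) h68),
      cast_choose_eq (a + 8) 3 (le_trans (by norm_num) h68),
      cast_choose_eq (a + 8) 4 (le_trans (by norm_num) h68),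
      cast_choose_eq (a + 8) 5 (le_trans (by norm_num) h68),
      cast_choose_eq (a + 8) 6 h68,
      cast_choose_eq (a + 7) 2 (le_trans (by norm_num) h67),
      cast_choose_eq (a + 7) 3 (le_trans (by norm_num) h67),
      cast_choose_eq (a + 7) 4 (le_trans (by norm_num) h67),
      cast_choose_eq (a + 7) 5 (le_trans (by norm_num) h67),
      cast_choose_eq (a + 7) 6 h67]
    simp only [Finset.prod_range_succ, Finset.prod_range_zero]
    push_cast
    norm_num [Nat.factorial]
    ring
  have hQ : ((45 : ℚ)) * ((univ.filter (fun c : Fin (2 ^ m - 1) → ZMod 2 =>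
        c ∈ C ∧ (univ.filter fun i => c i ≠ 0).card = 6)).card : ℚ)
      = (a + 7) * (a + 6) * (a + 5) * (a + 4) * (2 * a + 15) := by
    have hmacQ : (2 * (a : ℚ) + 16) * ((univ.filter (fun c : Fin (2 ^ m - 1) → ZMod 2 =>
          c ∈ C ∧ (univ.filter fun i => c i ≠ 0).card = 6)).card : ℚ)
        = (((2 * a + 15).choose 6 : ℕ) : ℚ)
          + (2 * a + 15) * ∑ i ∈ range (6 + 1), (-1 : ℚ) ^ i * (((a + 8).choose i : ℕ) : ℚ) *
              (((a + 7).choose (6 - i) : ℕ) : ℚ) := by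
      exact_mod_cast congrArg (fun z : ℤ => (z : ℚ)) hmac
    refine mul_left_cancel₀ (show (2 * (a : ℚ) + 16) ≠ 0 from by positivity) ?_
    calc (2 * (a : ℚ) + 16) * (45 * ((univ.filter (fun c : Fin (2 ^ m - 1) → ZMod 2 =>
            c ∈ C ∧ (univ.filter fun i => c i ≠ 0).card = 6)).card : ℚ))
        = 45 * ((2 * (a : ℚ) + 16) * ((univ.filter (fun c : Fin (2 ^ m - 1) → ZMod 2 =>
            c ∈ C ∧ (univ.filter fun i => c i ≠ 0).card = 6)).card : ℚ)) := by ring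
      _ = 45 * ((((2 * a + 15).choose 6 : ℕ) : ℚ)
          + (2 * a + 15) * ∑ i ∈ range (6 + 1), (-1 : ℚ) ^ i * (((a + 8).choose i : ℕ) : ℚ) *
              (((a + 7).choose (6 - i) : ℕ) : ℚ)) := by rw [hmacQ]
      _ = (2 * a + 16) * ((a + 7) * (a + 6) * (a + 5) * (a + 4) * (2 * a + 15)) := harith
  exact_mod_cast hQ
end

section
/- Let m ≥ 4. The number of codewords of weight 7 in the binary Hamming code of length 2^m−1 equals (2^{m-1}-1)(2^{m-1}-2)(2^{m-1}-3)(2^m-1)(4·2^{2(m-1)} − 30·2^{m-1} + 71)/630. -/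
/-!
Let `D = C^⊥`, a code with `2^m` words: zero and `2^m - 1` words of weight `p = 2^(m-1)`.
Sum `(-1)^(x ⬝ᵥ c)` over `x ∈ D` and over the words `c` of weight 7, in both orders. Summing
over `x` first detects `c ∈ D^⊥ = C`; summing over `c` first gives the Krawtchouk value
`K₇(wt x)`, which depends only on the weight of `x`. Hence `2^m · A₇ = K₇(0) + (2^m - 1) K₇(p)`,
and the claimed formula is this identity written out as a polynomial in `p`.
-/

open Finset Matrix

namespace BinaryCode

lemma sum_comp_eq_of_card_fiber {α M : Type*} [Fintype α] [AddCommMonoid M] (g : α → ℕ)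
    {p a : ℕ} (hp : p ≠ 0)
    (hg : ∀ w, Nat.card {x // g x = w} = if w = 0 then 1 else if w = p then a else 0)
    (f : ℕ → M) :
    ∑ x, f (g x) = f 0 + a • f p := by
  classical
  have hfiber : ∀ w, #{x | g x = w} = if w = 0 then 1 else if w = p then a else 0 := fun w => by
    rw [← hg, Nat.card_eq_fintype_card, Fintype.card_subtype]
  have hmaps : ∀ x ∈ univ, g x ∈ ({0, p} : Finset ℕ) := fun x _ => by
    by_contra hx
    simp only [mem_insert, mem_singleton, not_or] at hx
    have := hfiber (g x)
    rw [if_neg hx.1, if_neg hx.2, card_eq_zero, filter_eq_empty_iff] at this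
    exact this (mem_univ x) rfl
  have hconst : ∀ w, ∑ x with g x = w, f (g x) = #{x | g x = w} • f w := fun w => by
    rw [sum_congr rfl fun x hx => by rw [(mem_filter.1 hx).2], sum_const]
  rw [← sum_fiberwise_of_maps_to hmaps, sum_pair hp.symm, hconst, hconst, hfiber, hfiber,
    if_pos rfl, if_neg hp, if_pos rfl, one_smul]

def krawtchouk (n k w : ℕ) : ℤ :=
  ∑ j ∈ range (k + 1), (-1) ^ j * ((w.choose j * (n - w).choose (k - j) : ℕ) : ℤ)

lemma krawtchouk_zero_right (n k : ℕ) : krawtchouk n k 0 = n.choose k := by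
  simp [krawtchouk, sum_range_succ']

section Support

variable {ι : Type*} [Fintype ι] [DecidableEq ι]

lemma card_filter_card_inter_powersetCard (A : Finset ι) {j k : ℕ} (hjk : j ≤ k) :
    #{s ∈ powersetCard k univ | #(s ∩ A) = j} = (#A).choose j * (#Aᶜ).choose (k - j) := by
  rw [← card_powersetCard, ← card_powersetCard, ← card_product]
  refine card_nbij' (fun s => (s ∩ A, s \ A)) (fun p => p.1 ∪ p.2) ?_ ?_ ?_ ?_
  · intro s hs
    simp only [coe_filter, mem_powersetCard_univ, Set.mem_ofPred_eq] at hs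
    have := card_inter_add_card_sdiff s A
    simp only [coe_product, Set.mem_prod, mem_coe, mem_powersetCard]
    exact ⟨⟨inter_subset_right, hs.2⟩, fun i => by simp +contextual, by omega⟩
  · rintro ⟨t, u⟩ h
    simp only [coe_product, Set.mem_prod, mem_coe, mem_powersetCard,
      subset_compl_iff_disjoint_right] at h
    obtain ⟨⟨htA, rfl⟩, hu, huc⟩ := h
    have hd : Disjoint t u := disjoint_of_subset_left htA hu.symm
    simp only [coe_filter, mem_powersetCard_univ, Set.mem_ofPred_eq, card_union_of_disjoint hd,
      union_inter_distrib_right, inter_eq_left.2 htA, disjoint_iff_inter_eq_empty.1 hu,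
      union_empty, and_true]
    omega
  · intro s _
    exact sup_inf_sdiff s A
  · rintro ⟨t, u⟩ h
    simp only [coe_product, Set.mem_prod, mem_coe, mem_powersetCard,
      subset_compl_iff_disjoint_right] at h
    obtain ⟨⟨htA, -⟩, hu, -⟩ := h
    simp only [union_inter_distrib_right, inter_eq_left.2 htA, disjoint_iff_inter_eq_empty.1 hu,
      union_empty, union_sdiff_distrib, sdiff_eq_empty_iff_subset.2 htA, hu.sdiff_eq_left,
      empty_union]

lemma sum_powersetCard_neg_one_pow_card_inter (A : Finset ι) (k : ℕ) :
    ∑ s ∈ powersetCard k univ, (-1 : ℤ) ^ #(s ∩ A) = krawtchouk (Fintype.card ι) k #A := by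
  have hmaps : ∀ s ∈ powersetCard k univ, #(s ∩ A) ∈ range (k + 1) := fun s hs =>
    mem_range_succ_iff.2 ((card_le_card inter_subset_left).trans (mem_powersetCard_univ.1 hs).le)
  rw [← sum_fiberwise_of_maps_to hmaps, krawtchouk]
  refine sum_congr rfl fun j hj => ?_
  rw [sum_congr rfl fun s hs => by rw [(mem_filter.1 hs).2], sum_const,
    card_filter_card_inter_powersetCard A (mem_range_succ_iff.1 hj), card_compl, nsmul_eq_mul,
    mul_comm]

def supportEquiv : (ι → ZMod 2) ≃ Finset ι where
  toFun c := {i | c i ≠ 0}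
  invFun s i := if i ∈ s then 1 else 0
  left_inv c := funext fun i => by
    have h : ∀ a : ZMod 2, (if a ≠ 0 then 1 else 0) = a := by decide
    simpa using h (c i)
  right_inv s := by ext i; simp

lemma hammingNorm_eq_card_supportEquiv (c : ι → ZMod 2) :
    hammingNorm c = #(supportEquiv c) := rfl

lemma dotProduct_eq_card_inter (x c : ι → ZMod 2) :
    x ⬝ᵥ c = (#(supportEquiv x ∩ supportEquiv c) : ZMod 2) := by
  have h : ∀ a b : ZMod 2, a * b = if a ≠ 0 ∧ b ≠ 0 then 1 else 0 := by decide
  simp only [dotProduct, h, sum_boole, filter_and]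
  rfl

end Support

def signChar : AddChar (ZMod 2) ℤ where
  toFun a := (-1) ^ a.val
  map_zero_eq_one' := rfl
  map_add_eq_mul' := by decide

lemma signChar_eq_one_iff {a : ZMod 2} : signChar a = 1 ↔ a = 0 := by
  revert a; decide

lemma signChar_natCast (k : ℕ) : signChar k = (-1) ^ k := by
  show (-1 : ℤ) ^ (k : ZMod 2).val = _
  rw [ZMod.val_natCast, ← neg_one_pow_eq_pow_mod_two]

section Orthogonal

variable {ι : Type*} [Fintype ι]

lemma sum_signChar_dotProduct_hammingNorm_eq_krawtchouk [DecidableEq ι] (x : ι → ZMod 2)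
    (k : ℕ) :
    ∑ c with hammingNorm c = k, signChar (x ⬝ᵥ c) =
      krawtchouk (Fintype.card ι) k (hammingNorm x) := by
  rw [hammingNorm_eq_card_supportEquiv, ← sum_powersetCard_neg_one_pow_card_inter]
  refine sum_equiv supportEquiv (fun c => ?_) (fun c _ => ?_)
  · simp only [mem_filter, mem_univ, true_and, mem_powersetCard_univ]
    rfl
  · rw [dotProduct_eq_card_inter, signChar_natCast, inter_comm]

abbrev dotForm : LinearMap.BilinForm (ZMod 2) (ι → ZMod 2) := dotProductBilin (ZMod 2) (ZMod 2)

lemma mem_dotForm_orthogonal {D : Submodule (ZMod 2) (ι → ZMod 2)} {c : ι → ZMod 2} :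
    c ∈ dotForm.orthogonal D ↔ ∀ x ∈ D, x ⬝ᵥ c = 0 := Iff.rfl

lemma dotForm_isRefl : (dotForm : LinearMap.BilinForm (ZMod 2) (ι → ZMod 2)).IsRefl :=
  fun x y h => by simpa [dotProduct_comm] using h

lemma dotForm_orthogonal_orthogonal (C : Submodule (ZMod 2) (ι → ZMod 2)) :
    dotForm.orthogonal (dotForm.orthogonal C) = C :=
  LinearMap.BilinForm.orthogonal_orthogonal
    (dotForm_isRefl.nondegenerate_iff_separatingLeft.2 fun x hx => dotProduct_eq_zero x hx)
    dotForm_isRefl C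

open Classical in
lemma sum_signChar_dotProduct (D : Submodule (ZMod 2) (ι → ZMod 2)) [Fintype D]
    (c : ι → ZMod 2) :
    ∑ x : D, signChar ((x : ι → ZMod 2) ⬝ᵥ c) =
      if c ∈ dotForm.orthogonal D then (Nat.card D : ℤ) else 0 := by
  let ψ : AddChar D ℤ := signChar.compAddMonoidHom (dotForm.flip c ∘ₗ D.subtype).toAddMonoidHom
  have hψ : ψ = 0 ↔ c ∈ dotForm.orthogonal D := by
    simp [AddChar.eq_zero_iff, ψ, signChar_eq_one_iff]
  calc ∑ x : D, signChar ((x : ι → ZMod 2) ⬝ᵥ c) = ∑ x, ψ x := rfl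
    _ = _ := by simp only [AddChar.sum_eq_ite, hψ, Nat.card_eq_fintype_card]

lemma card_mul_card_orthogonal_hammingNorm_eq_sum_krawtchouk
    (D : Submodule (ZMod 2) (ι → ZMod 2)) [Fintype D] (k : ℕ) :
    (Nat.card D : ℤ) * Nat.card {c // c ∈ dotForm.orthogonal D ∧ hammingNorm c = k} =
      ∑ x : D, krawtchouk (Fintype.card ι) k (hammingNorm (x : ι → ZMod 2)) := by
  classical
  calc (Nat.card D : ℤ) * Nat.card {c // c ∈ dotForm.orthogonal D ∧ hammingNorm c = k}
      = ∑ c with hammingNorm c = k, if c ∈ dotForm.orthogonal D then (Nat.card D : ℤ) else 0 := by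
        rw [sum_ite, sum_const_zero, add_zero, sum_const, filter_filter, nsmul_eq_mul, mul_comm,
          Nat.card_eq_fintype_card (α := {c // _}), Fintype.card_subtype]
        simp only [and_comm]
    _ = ∑ c with hammingNorm c = k, ∑ x : D, signChar ((x : ι → ZMod 2) ⬝ᵥ c) := by
        simp only [sum_signChar_dotProduct]
    _ = ∑ x : D, ∑ c with hammingNorm c = k, signChar ((x : ι → ZMod 2) ⬝ᵥ c) := sum_comm
    _ = _ := by simp only [sum_signChar_dotProduct_hammingNorm_eq_krawtchouk]

end Orthogonal

lemma krawtchouk_seven_eq (p : ℕ) (hp : 1 ≤ p) :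
    630 * (krawtchouk (2 * p - 1) 7 0 + (2 * p - 1 : ℕ) * krawtchouk (2 * p - 1) 7 p) =
      2 * p * ((p - 1) * (p - 2) * (p - 3) * (2 * p - 1) * (4 * p ^ 2 - 30 * p + 71) : ℤ) := by
  have hsub : 2 * p - 1 - p = p - 1 := by omega
  rw [krawtchouk_zero_right, krawtchouk, hsub]
  qify
  simp only [sum_range_succ, sum_range_zero, Nat.cast_mul, Nat.cast_choose_eq_descPochhammer_div,
    descPochhammer_eval_eq_prod_range, prod_range_succ, prod_range_zero, Nat.factorial]
  push_cast [Nat.cast_sub hp, Nat.cast_sub (by omega : 1 ≤ 2 * p)]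
  ring

lemma weight7_count_of_krawtchouk {m N : ℕ} (hm : 4 ≤ m)
    (h : ((2 ^ m : ℕ) : ℤ) * N =
      krawtchouk (2 ^ m - 1) 7 0 + (2 ^ m - 1 : ℕ) * krawtchouk (2 ^ m - 1) 7 (2 ^ (m - 1))) :
    630 * N = (2 ^ (m - 1) - 1) * (2 ^ (m - 1) - 2) * (2 ^ (m - 1) - 3) * (2 ^ m - 1) *
      (4 * 2 ^ (2 * (m - 1)) - 30 * 2 ^ (m - 1) + 71) := by
  obtain ⟨p, hp⟩ : ∃ p, 2 ^ (m - 1) = p := ⟨_, rfl⟩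
  have h2m : 2 ^ m = 2 * p := by rw [← hp, ← pow_succ', Nat.sub_add_cancel (by omega)]
  have hsq : 2 ^ (2 * (m - 1)) = p ^ 2 := by rw [← hp, ← pow_mul, mul_comm]
  have hp8 : 8 ≤ p := hp ▸ (Nat.pow_le_pow_right two_pos (by omega) : 2 ^ 3 ≤ 2 ^ (m - 1))
  rw [hp, h2m] at h
  rw [hp, h2m, hsq]
  have hpoly := krawtchouk_seven_eq p (by omega)
  rw [← h] at hpoly
  -- `p ≥ 8` makes the truncated subtractions of the statement exact
  have h30 : 30 * p ≤ 4 * p ^ 2 := by nlinarith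
  zify [(by omega : 3 ≤ p), (by omega : 2 ≤ p), (by omega : 1 ≤ p), (by omega : 1 ≤ 2 * p), h30]
  refine mul_left_cancel₀ (by positivity : (2 * p : ℤ) ≠ 0) ?_
  push_cast at hpoly
  linear_combination hpoly

end BinaryCode

open BinaryCode

/-- Let m ≥ 4. The number of codewords of weight 7 in the binary Hamming code of
length 2^m-1 (whose dual has weight enumerator 1+(2^m-1)z^(2^(m-1))) equals
(2^(m-1)-1)(2^(m-1)-2)(2^(m-1)-3)(2^m-1)(4·2^(2(m-1)) − 30·2^(m-1) + 71)/630. -/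
theorem binary_hamming_weight7_count (m : ℕ) (hm : 4 ≤ m)
    (C : Submodule (ZMod 2) (Fin (2 ^ m - 1) → ZMod 2))
    (hdual : ∀ w : ℕ,
      Nat.card {x : Fin (2 ^ m - 1) → ZMod 2 //
          (∀ c ∈ C, ∑ i, x i * c i = 0) ∧
          (Finset.univ.filter (fun i => x i ≠ 0)).card = w} =
        if w = 0 then 1 else if w = 2 ^ (m - 1) then 2 ^ m - 1 else 0) :
    630 * Nat.card {c : Fin (2 ^ m - 1) → ZMod 2 // c ∈ C ∧
        (Finset.univ.filter (fun i => c i ≠ 0)).card = 7} =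
      (2 ^ (m - 1) - 1) * (2 ^ (m - 1) - 2) * (2 ^ (m - 1) - 3) * (2 ^ m - 1) *
        (4 * 2 ^ (2 * (m - 1)) - 30 * 2 ^ (m - 1) + 71) := by
  classical
  set D := dotForm.orthogonal C
  have hfiber : ∀ w, Nat.card {x : D // hammingNorm (x : Fin (2 ^ m - 1) → ZMod 2) = w} =
      if w = 0 then 1 else if w = 2 ^ (m - 1) then 2 ^ m - 1 else 0 := fun w => by
    rw [← hdual w]
    refine (Nat.card_congr
      (Equiv.subtypeSubtypeEquivSubtypeInter (· ∈ D) (hammingNorm · = w))).trans ?_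
    congr! 4 with x
    simp only [D, mem_dotForm_orthogonal, dotProduct_comm]
    rfl
  have hp : 2 ^ (m - 1) ≠ 0 := by positivity
  have hcard : Nat.card D = 2 ^ m := by
    have h := sum_comp_eq_of_card_fiber _ hp hfiber (fun _ => 1)
    simp only [sum_const, card_univ, ← Nat.card_eq_fintype_card, smul_eq_mul, mul_one] at h
    have := Nat.one_le_two_pow (n := m)
    omega
  have key := card_mul_card_orthogonal_hammingNorm_eq_sum_krawtchouk D 7
  rw [sum_comp_eq_of_card_fiber _ hp hfiber, dotForm_orthogonal_orthogonal, hcard,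
    Fintype.card_fin, nsmul_eq_mul] at key
  exact weight7_count_of_krawtchouk hm key
end

section
/- Let m ≥ 5 be odd, and let C be a binary [2^m−1, 2^m−1−2m] code whose dual has weight enumerator 1 + a·z^{2^{m-1}-2^{(m-1)/2}} + b·z^{2^{m-1}} + c·z^{2^{m-1}+2^{(m-1)/2}}, where a = (2^m−1)(2^{(m-1)/2}+1)2^{(m-3)/2}, b = (2^m−1)(2^{m-1}+1), c = (2^m−1)(2^{(m-1)/2}−1)2^{(m-3)/2}. Then A_1 = A_2 = A_3 = A_4 = 0 and A_5 = (4·2^{3m-5} − 22·2^{2m-4} + 26·2^{m-3} − 2)/15 > 0; in particular C has minimum distance 5. -/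
open Finset

namespace APN

def eps (a : ZMod 2) : ℤ := 1 - 2 * (a.val : ℤ)

lemma eps_add : ∀ a b : ZMod 2, eps (a + b) = eps a * eps b := by decide

lemma eps_zero : eps 0 = 1 := by decide

lemma eps_one_of_ne : ∀ a : ZMod 2, a ≠ 0 → eps a = -1 := by decide

lemma eps_natCast (k : ℕ) : eps (k : ZMod 2) = (-1) ^ k := by
  induction k with
  | zero => simp [eps_zero]
  | succ k ih =>
    push_cast
    rw [eps_add, ih]
    have h1 : eps 1 = -1 := by decide
    rw [h1]; ring

variable {nn : ℕ}

def dot (x v : Fin nn → ZMod 2) : ZMod 2 := ∑ i, x i * v i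

lemma dot_comm (x v : Fin nn → ZMod 2) : dot x v = dot v x := by
  simp [dot, mul_comm]

lemma dot_add_left (x y v : Fin nn → ZMod 2) : dot (x + y) v = dot x v + dot y v := by
  simp [dot, add_mul, Finset.sum_add_distrib]

def supp (v : Fin nn → ZMod 2) : Finset (Fin nn) := univ.filter (fun i => v i ≠ 0)

lemma eps_dot (x v : Fin nn → ZMod 2) :
    eps (dot x v) = (-1 : ℤ) ^ (supp x ∩ supp v).card := by
  have hset : univ.filter (fun i => x i * v i ≠ 0) = supp x ∩ supp v := by
    ext i
    simp [supp, mul_ne_zero_iff]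
  have h : dot x v = ((supp x ∩ supp v).card : ZMod 2) := by
    rw [dot, ← Finset.sum_filter_ne_zero, hset]
    have h2 : ∑ i ∈ supp x ∩ supp v, x i * v i = ∑ _i ∈ supp x ∩ supp v, (1 : ZMod 2) := by
      refine Finset.sum_congr rfl (fun i hi => ?_)
      simp only [mem_inter, supp, mem_filter] at hi
      have h1 : x i = 1 := by
        have hx := hi.1.2; revert hx; generalize x i = a; revert a; decide
      have hv : v i = 1 := by
        have hx := hi.2.2; revert hx; generalize v i = a; revert a; decide
      rw [h1, hv, one_mul]
    rw [h2, Finset.sum_const, nsmul_eq_mul, mul_one]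
  rw [h, eps_natCast]

open Classical in
lemma char_sum (D : Submodule (ZMod 2) (Fin nn → ZMod 2)) (v : Fin nn → ZMod 2) :
    ∑ x ∈ univ.filter (· ∈ D), eps (dot x v) =
      if ∀ x ∈ D, dot x v = 0 then ((univ.filter (· ∈ D)).card : ℤ) else 0 := by
  by_cases h : ∀ x ∈ D, dot x v = 0
  · rw [if_pos h]
    rw [Finset.sum_congr rfl (fun x hx => by
      rw [h x (by simpa using hx), eps_zero])]
    simp
  · rw [if_neg h]
    push_neg at h
    obtain ⟨x₀, hx₀D, hx₀⟩ := h
    have hself : ∀ y : Fin nn → ZMod 2, y + y = 0 := fun y => funext (fun i => CharTwo.add_self_eq_zero _)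
    have key : ∑ x ∈ univ.filter (· ∈ D), eps (dot x v)
        = ∑ x ∈ univ.filter (· ∈ D), eps (dot (x + x₀) v) := by
      apply Finset.sum_nbij' (fun x => x + x₀) (fun x => x + x₀)
      · intro x hx; simp only [mem_filter, mem_univ, true_and] at hx ⊢
        exact D.add_mem hx hx₀D
      · intro x hx; simp only [mem_filter, mem_univ, true_and] at hx ⊢
        exact D.add_mem hx hx₀D
      · intro x _; rw [add_assoc, hself, add_zero]
      · intro x _; rw [add_assoc, hself, add_zero]
      · intro x _; rw [add_assoc, hself, add_zero]
    have key2 : ∑ x ∈ univ.filter (· ∈ D), eps (dot (x + x₀) v)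
        = -∑ x ∈ univ.filter (· ∈ D), eps (dot x v) := by
      rw [← Finset.sum_neg_distrib]
      refine Finset.sum_congr rfl (fun x _ => ?_)
      rw [dot_add_left, eps_add, eps_one_of_ne _ hx₀]
      ring
    linarith [key, key2]

lemma sum_weight_eq (w : ℕ) (F : Finset (Fin nn) → ℤ) :
    ∑ v ∈ univ.filter (fun v : Fin nn → ZMod 2 => (supp v).card = w), F (supp v)
      = ∑ T ∈ Finset.powersetCard w (univ : Finset (Fin nn)), F T := by
  apply Finset.sum_nbij' (i := fun v => supp v)
    (j := fun T => (fun i => if i ∈ T then (1 : ZMod 2) else 0))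
  · intro v hv
    simp only [mem_filter, mem_univ, true_and] at hv
    simpa [Finset.mem_powersetCard_univ] using hv
  · intro T hT
    simp only [Finset.mem_powersetCard_univ] at hT
    simp only [mem_filter, mem_univ, true_and]
    rw [show supp (fun i => if i ∈ T then (1 : ZMod 2) else 0) = T by
      ext i; simp [supp]]
    exact hT
  · intro v hv
    funext i
    by_cases h : v i = 0 <;> simp [supp, h]
    · revert h; generalize v i = a; revert a; decide
  · intro T hT
    ext i; simp [supp]
  · intro v hv; rfl

lemma card_inter_fiber (S : Finset (Fin nn)) (w j : ℕ) (hj : j ≤ w) :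
    ((Finset.powersetCard w (univ : Finset (Fin nn))).filter
        (fun T => (S ∩ T).card = j)).card
      = S.card.choose j * (nn - S.card).choose (w - j) := by
  have key : ((Finset.powersetCard w (univ : Finset (Fin nn))).filter
        (fun T => (S ∩ T).card = j)).card
      = ((S.powersetCard j) ×ˢ (Sᶜ.powersetCard (w - j))).card := by
    apply Finset.card_nbij' (i := fun T => (S ∩ T, T \ S)) (j := fun p => p.1 ∪ p.2)
    · intro T hT
      simp only [mem_coe, mem_filter, Finset.mem_powersetCard_univ] at hT
      simp only [mem_coe, Finset.mem_product, Finset.mem_powersetCard]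
      refine ⟨⟨inter_subset_left, hT.2⟩, ⟨fun i hi => ?_, ?_⟩⟩
      · simp only [Finset.mem_sdiff] at hi; simp [hi.2]
      · have h1 : (S ∩ T).card + (T \ S).card = T.card := by
          rw [Finset.inter_comm]; exact Finset.card_inter_add_card_sdiff T S
        omega
    · intro p hp
      simp only [mem_coe, Finset.mem_product, Finset.mem_powersetCard] at hp
      simp only [mem_coe, mem_filter, Finset.mem_powersetCard_univ]
      obtain ⟨⟨hp1, hp1c⟩, hp2, hp2c⟩ := hp
      have hdisj : Disjoint p.1 p.2 := by
        refine Finset.disjoint_left.mpr (fun i hi1 hi2 => ?_)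
        have := hp2 hi2; rw [Finset.mem_compl] at this; exact this (hp1 hi1)
      constructor
      · rw [Finset.card_union_of_disjoint hdisj, hp1c, hp2c]; omega
      · have : S ∩ (p.1 ∪ p.2) = p.1 := by
          rw [Finset.inter_union_distrib_left]
          have h2 : S ∩ p.2 = ∅ := by
            refine Finset.eq_empty_of_forall_notMem (fun i hi => ?_)
            rw [Finset.mem_inter] at hi
            have := hp2 hi.2; rw [Finset.mem_compl] at this; exact this hi.1
          rw [h2, Finset.union_empty, Finset.inter_eq_right.mpr hp1]
        rw [this, hp1c]
    · intro T hT
      simp only [mem_coe, mem_filter] at hT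
      ext i
      simp only [Finset.mem_union, Finset.mem_inter, Finset.mem_sdiff]
      tauto
    · intro p hp
      simp only [mem_coe, Finset.mem_product, Finset.mem_powersetCard] at hp
      obtain ⟨⟨hp1, _⟩, hp2, _⟩ := hp
      have h2 : ∀ i ∈ p.2, i ∉ S := fun i hi => Finset.mem_compl.mp (hp2 hi)
      have : S ∩ (p.1 ∪ p.2) = p.1 := by
        rw [Finset.inter_union_distrib_left]
        have h3 : S ∩ p.2 = ∅ :=
          Finset.eq_empty_of_forall_notMem (fun i hi => h2 i (Finset.mem_inter.mp hi).2 (Finset.mem_inter.mp hi).1)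
        rw [h3, Finset.union_empty, Finset.inter_eq_right.mpr hp1]
      have h4 : (p.1 ∪ p.2) \ S = p.2 := by
        ext i
        simp only [Finset.mem_sdiff, Finset.mem_union]
        constructor
        · rintro ⟨h5 | h5, h6⟩
          · exact absurd (hp1 h5) h6
          · exact h5
        · intro h5; exact ⟨Or.inr h5, h2 i h5⟩
      rw [Prod.ext_iff]; exact ⟨this, h4⟩
  rw [key, Finset.card_product, Finset.card_powersetCard, Finset.card_powersetCard,
    Finset.card_compl, Fintype.card_fin]

lemma kraw (S : Finset (Fin nn)) (w : ℕ) :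
    ∑ v ∈ univ.filter (fun v : Fin nn → ZMod 2 => (supp v).card = w),
        (-1 : ℤ) ^ (S ∩ supp v).card
      = ∑ j ∈ Finset.range (w + 1),
          (-1 : ℤ) ^ j * (S.card.choose j) * ((nn - S.card).choose (w - j)) := by
  rw [sum_weight_eq w (fun T => (-1 : ℤ) ^ (S ∩ T).card)]
  have hmap : ∀ T ∈ Finset.powersetCard w (univ : Finset (Fin nn)),
      (S ∩ T).card ∈ Finset.range (w + 1) := by
    intro T hT
    simp only [Finset.mem_powersetCard_univ] at hT
    rw [Finset.mem_range]
    have := Finset.card_le_card (Finset.inter_subset_right (s₁ := S) (s₂ := T))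
    omega
  rw [← Finset.sum_fiberwise_of_maps_to hmap (fun T => (-1 : ℤ) ^ (S ∩ T).card)]
  refine Finset.sum_congr rfl (fun j hj => ?_)
  rw [Finset.sum_congr rfl (fun T hT => by
    simp only [mem_filter] at hT
    rw [hT.2])]
  rw [Finset.sum_const, card_inter_fiber S w j (by simp only [Finset.mem_range] at hj; omega)]
  push_cast; ring

lemma cast_descFactorial (N j : ℕ) (h : j ≤ N) :
    (N.descFactorial j : ℚ) = ∏ i ∈ Finset.range j, ((N : ℚ) - i) := by
  induction j with
  | zero => simp
  | succ j ih =>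
    rw [Nat.descFactorial_succ, Finset.prod_range_succ, ← ih (by omega)]
    push_cast [Nat.cast_sub (show j ≤ N by omega)]
    ring

lemma cast_choose (N j : ℕ) (h : j ≤ N) :
    (N.choose j : ℚ) = (∏ i ∈ Finset.range j, ((N : ℚ) - i)) / (j.factorial : ℚ) := by
  rw [← cast_descFactorial N j h, Nat.descFactorial_eq_factorial_mul_choose]
  push_cast
  rw [mul_comm, mul_div_assoc, div_self (by exact_mod_cast j.factorial_ne_zero), mul_one]

lemma dot_add_right (x y v : Fin nn → ZMod 2) : dot v (x + y) = dot v x + dot v y := by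
  simp [dot, mul_add, Finset.sum_add_distrib]

lemma dot_zero_right (v : Fin nn → ZMod 2) : dot v 0 = 0 := by simp [dot]

def dualM (M : Submodule (ZMod 2) (Fin nn → ZMod 2)) :
    Submodule (ZMod 2) (Fin nn → ZMod 2) where
  carrier := {x | ∀ c ∈ M, dot c x = 0}
  add_mem' := fun hx hy c hc => by rw [dot_add_right, hx c hc, hy c hc, add_zero]
  zero_mem' := fun c hc => dot_zero_right c
  smul_mem' := fun r x hx c hc => by
    have : dot c (r • x) = r * dot c x := by
      simp [dot, Finset.mul_sum]; exact Finset.sum_congr rfl (fun i _ => by ring)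
    rw [this, hx c hc, mul_zero]

lemma mem_dualM {M : Submodule (ZMod 2) (Fin nn → ZMod 2)} {x : Fin nn → ZMod 2} :
    x ∈ dualM M ↔ ∀ c ∈ M, dot c x = 0 := Iff.rfl

lemma forall_dot_eq_zero {x : Fin nn → ZMod 2} (h : ∀ v, dot v x = 0) : x = 0 := by
  funext i
  have := h (Pi.single i 1)
  rw [dot] at this
  simp only [Pi.single_apply, ite_mul, one_mul, zero_mul] at this
  rw [Finset.sum_ite_eq' univ i (fun j => x j)] at this
  simpa using this

open Classical in
lemma char_sum_total (x : Fin nn → ZMod 2) :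
    ∑ v : Fin nn → ZMod 2, eps (dot x v) = if x = 0 then ((2 : ℤ)^nn) else 0 := by
  have h1 : ∑ v : Fin nn → ZMod 2, eps (dot x v) = ∑ v ∈ univ.filter (· ∈ (⊤ : Submodule (ZMod 2) (Fin nn → ZMod 2))), eps (dot v x) := by
    rw [Finset.filter_true_of_mem (fun v _ => Submodule.mem_top)]
    exact Finset.sum_congr rfl (fun v _ => by rw [dot_comm])
  rw [h1, char_sum]
  by_cases hx : x = 0
  · rw [if_pos hx, if_pos (fun v _ => by rw [hx]; simp [dot])]
    rw [Finset.filter_true_of_mem (fun v _ => Submodule.mem_top), Finset.card_univ]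
    simp [ZMod.card]
  · rw [if_neg hx, if_neg]
    intro h
    exact hx (forall_dot_eq_zero (fun v => h v Submodule.mem_top))

open Classical in
lemma card_dual_mul (D : Submodule (ZMod 2) (Fin nn → ZMod 2)) :
    ((univ.filter (· ∈ dualM D)).card : ℤ) * ((univ.filter (· ∈ D)).card : ℤ) = 2 ^ nn := by
  have key : ∑ v : Fin nn → ZMod 2, ∑ x ∈ univ.filter (· ∈ D), eps (dot x v)
      = ((univ.filter (· ∈ dualM D)).card : ℤ) * ((univ.filter (· ∈ D)).card : ℤ) := by
    rw [Finset.sum_congr rfl (fun v _ => char_sum D v)]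
    rw [← Finset.sum_filter]
    have hfeq : (univ.filter (fun v : Fin nn → ZMod 2 => ∀ x ∈ D, dot x v = 0))
        = univ.filter (· ∈ dualM D) := by
      apply Finset.filter_congr
      intro v _
      exact ⟨fun h c hc => h c hc, fun h c hc => h c hc⟩
    rw [hfeq, Finset.sum_const, nsmul_eq_mul]
  have key2 : ∑ v : Fin nn → ZMod 2, ∑ x ∈ univ.filter (· ∈ D), eps (dot x v) = 2 ^ nn := by
    rw [Finset.sum_comm]
    rw [Finset.sum_congr rfl (fun x _ => char_sum_total x)]
    rw [Finset.sum_ite_eq' (univ.filter (· ∈ D)) 0 (fun _ => (2:ℤ)^nn)]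
    rw [if_pos]
    simp only [mem_filter, mem_univ, true_and]
    exact D.zero_mem
  rw [← key, key2]

open Classical in
lemma main_count (D : Submodule (ZMod 2) (Fin nn → ZMod 2)) (w : ℕ) :
    ((univ.filter (· ∈ D)).card : ℤ) *
        ((univ.filter (fun v : Fin nn → ZMod 2 => v ∈ dualM D ∧ (supp v).card = w)).card : ℤ)
      = ∑ x ∈ univ.filter (· ∈ D), ∑ j ∈ Finset.range (w + 1),
          (-1 : ℤ) ^ j * ((supp x).card.choose j) * ((nn - (supp x).card).choose (w - j)) := by
  have step1 : ∀ x ∈ univ.filter (· ∈ D),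
      ∑ j ∈ Finset.range (w + 1),
          (-1 : ℤ) ^ j * ((supp x).card.choose j) * ((nn - (supp x).card).choose (w - j))
        = ∑ v ∈ univ.filter (fun v : Fin nn → ZMod 2 => (supp v).card = w),
            eps (dot x v) := by
    intro x _
    rw [← kraw (supp x) w]
    exact Finset.sum_congr rfl (fun v _ => (eps_dot x v).symm)
  rw [Finset.sum_congr rfl step1, Finset.sum_comm]
  rw [Finset.sum_congr rfl (fun v _ => char_sum D v)]
  rw [← Finset.sum_filter]
  have hfeq : ((univ.filter (fun v : Fin nn → ZMod 2 => (supp v).card = w)).filter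
        (fun v => ∀ x ∈ D, dot x v = 0))
      = univ.filter (fun v : Fin nn → ZMod 2 => v ∈ dualM D ∧ (supp v).card = w) := by
    rw [Finset.filter_filter]
    apply Finset.filter_congr
    intro v _
    constructor
    · rintro ⟨h1, h2⟩; exact ⟨fun c hc => h2 c hc, h1⟩
    · rintro ⟨h1, h2⟩; exact ⟨h2, fun c hc => h1 c hc⟩
  rw [hfeq, Finset.sum_const, nsmul_eq_mul, mul_comm]

open Classical in
lemma sum_fiber_wt (D : Submodule (ZMod 2) (Fin nn → ZMod 2)) (f : ℕ → ℤ) :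
    ∑ x ∈ univ.filter (· ∈ D), f ((supp x).card)
      = ∑ s ∈ Finset.range (nn + 1),
          (((univ.filter (· ∈ D)).filter (fun x => (supp x).card = s)).card : ℤ) * f s := by
  have hmap : ∀ x ∈ univ.filter (· ∈ D), (supp x).card ∈ Finset.range (nn + 1) := by
    intro x _
    rw [Finset.mem_range]
    have h1 : (supp x).card ≤ (univ : Finset (Fin nn)).card := Finset.card_filter_le _ _
    rw [Finset.card_univ, Fintype.card_fin] at h1
    omega
  rw [← Finset.sum_fiberwise_of_maps_to hmap (fun x => f ((supp x).card))]
  refine Finset.sum_congr rfl (fun s _ => ?_)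
  rw [Finset.sum_congr rfl (fun x hx => by
    simp only [mem_filter] at hx
    rw [hx.2])]
  rw [Finset.sum_const, nsmul_eq_mul]

lemma choose_c0 (N : ℕ) : (N.choose 0 : ℚ) = 1 := by simp
lemma choose_c1 (N : ℕ) : (N.choose 1 : ℚ) = N := by simp
lemma choose_c2 (N : ℕ) (h : 2 ≤ N) : (N.choose 2 : ℚ) = N * (N - 1) / 2 := by
  rw [cast_choose N 2 h]; simp [Finset.prod_range_succ, Nat.factorial]
lemma choose_c3 (N : ℕ) (h : 3 ≤ N) : (N.choose 3 : ℚ) = N * (N - 1) * (N - 2) / 6 := by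
  rw [cast_choose N 3 h]; simp [Finset.prod_range_succ, Nat.factorial]
lemma choose_c4 (N : ℕ) (h : 4 ≤ N) :
    (N.choose 4 : ℚ) = N * (N - 1) * (N - 2) * (N - 3) / 24 := by
  rw [cast_choose N 4 h]; simp [Finset.prod_range_succ, Nat.factorial]
lemma choose_c5 (N : ℕ) (h : 5 ≤ N) :
    (N.choose 5 : ℚ) = N * (N - 1) * (N - 2) * (N - 3) * (N - 4) / 120 := by
  rw [cast_choose N 5 h]; simp [Finset.prod_range_succ, Nat.factorial]

def Kr (nn w s : ℕ) : ℤ :=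
  ∑ j ∈ Finset.range (w + 1), (-1 : ℤ) ^ j * (s.choose j) * ((nn - s).choose (w - j))

lemma sig1 (q u : ℕ) (hq : 2 ≤ q) (hu : q * q = u) :
    ((Kr (8*u-1) 1 0 : ℤ)
      + ((8*u-1)*(2*q+1)*q : ℕ) * Kr (8*u-1) 1 (4*u-2*q)
      + ((8*u-1)*(4*u+1) : ℕ) * Kr (8*u-1) 1 (4*u)
      + ((8*u-1)*(2*q-1)*q : ℕ) * Kr (8*u-1) 1 (4*u+2*q)) = 0 := by
  have hu2 : 2 * q ≤ u := by nlinarith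
  have h4 : 4 ≤ u := by nlinarith
  have e1 : 8*u-1-(4*u-2*q) = 4*u+2*q-1 := by omega
  have e2 : 8*u-1-(4*u) = 4*u-1 := by omega
  have e3 : 8*u-1-(4*u+2*q) = 4*u-2*q-1 := by omega
  have e0 : 8*u-1-0 = 8*u-1 := by omega
  have z2 : Nat.choose 0 2 = 0 := rfl
  have z3 : Nat.choose 0 3 = 0 := rfl
  have z4 : Nat.choose 0 4 = 0 := rfl
  have z5 : Nat.choose 0 5 = 0 := rfl
  simp only [Kr, Finset.sum_range_succ, Finset.sum_range_zero, e0, e1, e2, e3]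
  qify
  push_cast
  simp only [Nat.choose_zero_right, Nat.choose_self, Nat.choose_one_right,
    Nat.choose_zero_succ, Nat.choose_succ_self_right, z2, z3, z4, z5]
  push_cast
  have hc1 : ((4*u-2*q : ℕ) : ℚ) = 4*(u:ℚ)-2*(q:ℚ) := by
    rw [Nat.cast_sub (by omega : 2*q ≤ 4*u)]; push_cast; ring
  have hc3 : ((8*u-1 : ℕ) : ℚ) = 8*(u:ℚ)-1 := by
    rw [Nat.cast_sub (by omega : 1 ≤ 8*u)]; push_cast; ring
  have hc4 : ((2*q-1 : ℕ) : ℚ) = 2*(q:ℚ)-1 := by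
    rw [Nat.cast_sub (by omega : 1 ≤ 2*q)]; push_cast; ring
  have hc5 : ((4*u-1 : ℕ) : ℚ) = 4*(u:ℚ)-1 := by
    rw [Nat.cast_sub (by omega : 1 ≤ 4*u)]; push_cast; ring
  have hc6 : ((4*u+2*q-1 : ℕ) : ℚ) = 4*(u:ℚ)+2*(q:ℚ)-1 := by
    rw [Nat.cast_sub (by omega : 1 ≤ 4*u+2*q)]; push_cast; ring
  have hc7 : ((4*u-2*q-1 : ℕ) : ℚ) = 4*(u:ℚ)-2*(q:ℚ)-1 := by
    rw [Nat.cast_sub (by omega : 1 ≤ 4*u-2*q), Nat.cast_sub (by omega : 2*q ≤ 4*u)]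
    push_cast; ring
  push_cast
  simp only [hc7, hc6, hc5, hc4, hc3, hc1]
  field_simp
  subst hu
  push_cast
  ring

lemma sig2 (q u : ℕ) (hq : 2 ≤ q) (hu : q * q = u) :
    ((Kr (8*u-1) 2 0 : ℤ)
      + ((8*u-1)*(2*q+1)*q : ℕ) * Kr (8*u-1) 2 (4*u-2*q)
      + ((8*u-1)*(4*u+1) : ℕ) * Kr (8*u-1) 2 (4*u)
      + ((8*u-1)*(2*q-1)*q : ℕ) * Kr (8*u-1) 2 (4*u+2*q)) = 0 := by
  have hu2 : 2 * q ≤ u := by nlinarith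
  have h4 : 4 ≤ u := by nlinarith
  have e1 : 8*u-1-(4*u-2*q) = 4*u+2*q-1 := by omega
  have e2 : 8*u-1-(4*u) = 4*u-1 := by omega
  have e3 : 8*u-1-(4*u+2*q) = 4*u-2*q-1 := by omega
  have e0 : 8*u-1-0 = 8*u-1 := by omega
  have z2 : Nat.choose 0 2 = 0 := rfl
  have z3 : Nat.choose 0 3 = 0 := rfl
  have z4 : Nat.choose 0 4 = 0 := rfl
  have z5 : Nat.choose 0 5 = 0 := rfl
  simp only [Kr, Finset.sum_range_succ, Finset.sum_range_zero, e0, e1, e2, e3]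
  qify
  push_cast
  simp only [Nat.choose_zero_right, Nat.choose_self, Nat.choose_one_right,
    Nat.choose_zero_succ, Nat.choose_succ_self_right, z2, z3, z4, z5]
  push_cast
  simp only [choose_c2 (4*u-2*q) (by omega),
    choose_c2 (4*u) (by omega),
    choose_c2 (4*u+2*q) (by omega),
    choose_c2 (8*u-1) (by omega),
    choose_c2 (4*u+2*q-1) (by omega),
    choose_c2 (4*u-1) (by omega),
    choose_c2 (4*u-2*q-1) (by omega)]
  have hc1 : ((4*u-2*q : ℕ) : ℚ) = 4*(u:ℚ)-2*(q:ℚ) := by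
    rw [Nat.cast_sub (by omega : 2*q ≤ 4*u)]; push_cast; ring
  have hc3 : ((8*u-1 : ℕ) : ℚ) = 8*(u:ℚ)-1 := by
    rw [Nat.cast_sub (by omega : 1 ≤ 8*u)]; push_cast; ring
  have hc4 : ((2*q-1 : ℕ) : ℚ) = 2*(q:ℚ)-1 := by
    rw [Nat.cast_sub (by omega : 1 ≤ 2*q)]; push_cast; ring
  have hc5 : ((4*u-1 : ℕ) : ℚ) = 4*(u:ℚ)-1 := by
    rw [Nat.cast_sub (by omega : 1 ≤ 4*u)]; push_cast; ring
  have hc6 : ((4*u+2*q-1 : ℕ) : ℚ) = 4*(u:ℚ)+2*(q:ℚ)-1 := by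
    rw [Nat.cast_sub (by omega : 1 ≤ 4*u+2*q)]; push_cast; ring
  have hc7 : ((4*u-2*q-1 : ℕ) : ℚ) = 4*(u:ℚ)-2*(q:ℚ)-1 := by
    rw [Nat.cast_sub (by omega : 1 ≤ 4*u-2*q), Nat.cast_sub (by omega : 2*q ≤ 4*u)]
    push_cast; ring
  push_cast
  simp only [hc7, hc6, hc5, hc4, hc3, hc1]
  field_simp
  subst hu
  push_cast
  ring

lemma sig3 (q u : ℕ) (hq : 2 ≤ q) (hu : q * q = u) :
    ((Kr (8*u-1) 3 0 : ℤ)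
      + ((8*u-1)*(2*q+1)*q : ℕ) * Kr (8*u-1) 3 (4*u-2*q)
      + ((8*u-1)*(4*u+1) : ℕ) * Kr (8*u-1) 3 (4*u)
      + ((8*u-1)*(2*q-1)*q : ℕ) * Kr (8*u-1) 3 (4*u+2*q)) = 0 := by
  have hu2 : 2 * q ≤ u := by nlinarith
  have h4 : 4 ≤ u := by nlinarith
  have e1 : 8*u-1-(4*u-2*q) = 4*u+2*q-1 := by omega
  have e2 : 8*u-1-(4*u) = 4*u-1 := by omega
  have e3 : 8*u-1-(4*u+2*q) = 4*u-2*q-1 := by omega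
  have e0 : 8*u-1-0 = 8*u-1 := by omega
  have z2 : Nat.choose 0 2 = 0 := rfl
  have z3 : Nat.choose 0 3 = 0 := rfl
  have z4 : Nat.choose 0 4 = 0 := rfl
  have z5 : Nat.choose 0 5 = 0 := rfl
  simp only [Kr, Finset.sum_range_succ, Finset.sum_range_zero, e0, e1, e2, e3]
  qify
  push_cast
  simp only [Nat.choose_zero_right, Nat.choose_self, Nat.choose_one_right,
    Nat.choose_zero_succ, Nat.choose_succ_self_right, z2, z3, z4, z5]
  push_cast
  simp only [choose_c2 (4*u-2*q) (by omega),
    choose_c3 (4*u-2*q) (by omega),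
    choose_c2 (4*u) (by omega),
    choose_c3 (4*u) (by omega),
    choose_c2 (4*u+2*q) (by omega),
    choose_c3 (4*u+2*q) (by omega),
    choose_c2 (8*u-1) (by omega),
    choose_c3 (8*u-1) (by omega),
    choose_c2 (4*u+2*q-1) (by omega),
    choose_c3 (4*u+2*q-1) (by omega),
    choose_c2 (4*u-1) (by omega),
    choose_c3 (4*u-1) (by omega),
    choose_c2 (4*u-2*q-1) (by omega),
    choose_c3 (4*u-2*q-1) (by omega)]
  have hc1 : ((4*u-2*q : ℕ) : ℚ) = 4*(u:ℚ)-2*(q:ℚ) := by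
    rw [Nat.cast_sub (by omega : 2*q ≤ 4*u)]; push_cast; ring
  have hc3 : ((8*u-1 : ℕ) : ℚ) = 8*(u:ℚ)-1 := by
    rw [Nat.cast_sub (by omega : 1 ≤ 8*u)]; push_cast; ring
  have hc4 : ((2*q-1 : ℕ) : ℚ) = 2*(q:ℚ)-1 := by
    rw [Nat.cast_sub (by omega : 1 ≤ 2*q)]; push_cast; ring
  have hc5 : ((4*u-1 : ℕ) : ℚ) = 4*(u:ℚ)-1 := by
    rw [Nat.cast_sub (by omega : 1 ≤ 4*u)]; push_cast; ring
  have hc6 : ((4*u+2*q-1 : ℕ) : ℚ) = 4*(u:ℚ)+2*(q:ℚ)-1 := by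
    rw [Nat.cast_sub (by omega : 1 ≤ 4*u+2*q)]; push_cast; ring
  have hc7 : ((4*u-2*q-1 : ℕ) : ℚ) = 4*(u:ℚ)-2*(q:ℚ)-1 := by
    rw [Nat.cast_sub (by omega : 1 ≤ 4*u-2*q), Nat.cast_sub (by omega : 2*q ≤ 4*u)]
    push_cast; ring
  push_cast
  simp only [hc7, hc6, hc5, hc4, hc3, hc1]
  field_simp
  subst hu
  push_cast
  ring

lemma sig4 (q u : ℕ) (hq : 2 ≤ q) (hu : q * q = u) :
    ((Kr (8*u-1) 4 0 : ℤ)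
      + ((8*u-1)*(2*q+1)*q : ℕ) * Kr (8*u-1) 4 (4*u-2*q)
      + ((8*u-1)*(4*u+1) : ℕ) * Kr (8*u-1) 4 (4*u)
      + ((8*u-1)*(2*q-1)*q : ℕ) * Kr (8*u-1) 4 (4*u+2*q)) = 0 := by
  have hu2 : 2 * q ≤ u := by nlinarith
  have h4 : 4 ≤ u := by nlinarith
  have e1 : 8*u-1-(4*u-2*q) = 4*u+2*q-1 := by omega
  have e2 : 8*u-1-(4*u) = 4*u-1 := by omega
  have e3 : 8*u-1-(4*u+2*q) = 4*u-2*q-1 := by omega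
  have e0 : 8*u-1-0 = 8*u-1 := by omega
  have z2 : Nat.choose 0 2 = 0 := rfl
  have z3 : Nat.choose 0 3 = 0 := rfl
  have z4 : Nat.choose 0 4 = 0 := rfl
  have z5 : Nat.choose 0 5 = 0 := rfl
  simp only [Kr, Finset.sum_range_succ, Finset.sum_range_zero, e0, e1, e2, e3]
  qify
  push_cast
  simp only [Nat.choose_zero_right, Nat.choose_self, Nat.choose_one_right,
    Nat.choose_zero_succ, Nat.choose_succ_self_right, z2, z3, z4, z5]
  push_cast
  simp only [choose_c2 (4*u-2*q) (by omega),
    choose_c3 (4*u-2*q) (by omega),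
    choose_c4 (4*u-2*q) (by omega),
    choose_c2 (4*u) (by omega),
    choose_c3 (4*u) (by omega),
    choose_c4 (4*u) (by omega),
    choose_c2 (4*u+2*q) (by omega),
    choose_c3 (4*u+2*q) (by omega),
    choose_c4 (4*u+2*q) (by omega),
    choose_c2 (8*u-1) (by omega),
    choose_c3 (8*u-1) (by omega),
    choose_c4 (8*u-1) (by omega),
    choose_c2 (4*u+2*q-1) (by omega),
    choose_c3 (4*u+2*q-1) (by omega),
    choose_c4 (4*u+2*q-1) (by omega),
    choose_c2 (4*u-1) (by omega),
    choose_c3 (4*u-1) (by omega),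
    choose_c4 (4*u-1) (by omega),
    choose_c2 (4*u-2*q-1) (by omega),
    choose_c3 (4*u-2*q-1) (by omega),
    choose_c4 (4*u-2*q-1) (by omega)]
  have hc1 : ((4*u-2*q : ℕ) : ℚ) = 4*(u:ℚ)-2*(q:ℚ) := by
    rw [Nat.cast_sub (by omega : 2*q ≤ 4*u)]; push_cast; ring
  have hc3 : ((8*u-1 : ℕ) : ℚ) = 8*(u:ℚ)-1 := by
    rw [Nat.cast_sub (by omega : 1 ≤ 8*u)]; push_cast; ring
  have hc4 : ((2*q-1 : ℕ) : ℚ) = 2*(q:ℚ)-1 := by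
    rw [Nat.cast_sub (by omega : 1 ≤ 2*q)]; push_cast; ring
  have hc5 : ((4*u-1 : ℕ) : ℚ) = 4*(u:ℚ)-1 := by
    rw [Nat.cast_sub (by omega : 1 ≤ 4*u)]; push_cast; ring
  have hc6 : ((4*u+2*q-1 : ℕ) : ℚ) = 4*(u:ℚ)+2*(q:ℚ)-1 := by
    rw [Nat.cast_sub (by omega : 1 ≤ 4*u+2*q)]; push_cast; ring
  have hc7 : ((4*u-2*q-1 : ℕ) : ℚ) = 4*(u:ℚ)-2*(q:ℚ)-1 := by
    rw [Nat.cast_sub (by omega : 1 ≤ 4*u-2*q), Nat.cast_sub (by omega : 2*q ≤ 4*u)]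
    push_cast; ring
  push_cast
  simp only [hc7, hc6, hc5, hc4, hc3, hc1]
  field_simp
  subst hu
  push_cast
  ring

lemma sig5 (q u : ℕ) (hq : 2 ≤ q) (hu : q * q = u) :
    15 * ((Kr (8*u-1) 5 0 : ℤ)
      + ((8*u-1)*(2*q+1)*q : ℕ) * Kr (8*u-1) 5 (4*u-2*q)
      + ((8*u-1)*(4*u+1) : ℕ) * Kr (8*u-1) 5 (4*u)
      + ((8*u-1)*(2*q-1)*q : ℕ) * Kr (8*u-1) 5 (4*u+2*q)) = 64 * (u:ℤ)^2 * (64*u^3 - 88*u^2 + 26*u - 2) := by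
  have hu2 : 2 * q ≤ u := by nlinarith
  have h4 : 4 ≤ u := by nlinarith
  have e1 : 8*u-1-(4*u-2*q) = 4*u+2*q-1 := by omega
  have e2 : 8*u-1-(4*u) = 4*u-1 := by omega
  have e3 : 8*u-1-(4*u+2*q) = 4*u-2*q-1 := by omega
  have e0 : 8*u-1-0 = 8*u-1 := by omega
  have z2 : Nat.choose 0 2 = 0 := rfl
  have z3 : Nat.choose 0 3 = 0 := rfl
  have z4 : Nat.choose 0 4 = 0 := rfl
  have z5 : Nat.choose 0 5 = 0 := rfl
  simp only [Kr, Finset.sum_range_succ, Finset.sum_range_zero, e0, e1, e2, e3]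
  qify
  push_cast
  simp only [Nat.choose_zero_right, Nat.choose_self, Nat.choose_one_right,
    Nat.choose_zero_succ, Nat.choose_succ_self_right, z2, z3, z4, z5]
  push_cast
  simp only [choose_c2 (4*u-2*q) (by omega),
    choose_c3 (4*u-2*q) (by omega),
    choose_c4 (4*u-2*q) (by omega),
    choose_c5 (4*u-2*q) (by omega),
    choose_c2 (4*u) (by omega),
    choose_c3 (4*u) (by omega),
    choose_c4 (4*u) (by omega),
    choose_c5 (4*u) (by omega),
    choose_c2 (4*u+2*q) (by omega),
    choose_c3 (4*u+2*q) (by omega),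
    choose_c4 (4*u+2*q) (by omega),
    choose_c5 (4*u+2*q) (by omega),
    choose_c2 (8*u-1) (by omega),
    choose_c3 (8*u-1) (by omega),
    choose_c4 (8*u-1) (by omega),
    choose_c5 (8*u-1) (by omega),
    choose_c2 (4*u+2*q-1) (by omega),
    choose_c3 (4*u+2*q-1) (by omega),
    choose_c4 (4*u+2*q-1) (by omega),
    choose_c5 (4*u+2*q-1) (by omega),
    choose_c2 (4*u-1) (by omega),
    choose_c3 (4*u-1) (by omega),
    choose_c4 (4*u-1) (by omega),
    choose_c5 (4*u-1) (by omega),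
    choose_c2 (4*u-2*q-1) (by omega),
    choose_c3 (4*u-2*q-1) (by omega),
    choose_c4 (4*u-2*q-1) (by omega),
    choose_c5 (4*u-2*q-1) (by omega)]
  have hc1 : ((4*u-2*q : ℕ) : ℚ) = 4*(u:ℚ)-2*(q:ℚ) := by
    rw [Nat.cast_sub (by omega : 2*q ≤ 4*u)]; push_cast; ring
  have hc3 : ((8*u-1 : ℕ) : ℚ) = 8*(u:ℚ)-1 := by
    rw [Nat.cast_sub (by omega : 1 ≤ 8*u)]; push_cast; ring
  have hc4 : ((2*q-1 : ℕ) : ℚ) = 2*(q:ℚ)-1 := by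
    rw [Nat.cast_sub (by omega : 1 ≤ 2*q)]; push_cast; ring
  have hc5 : ((4*u-1 : ℕ) : ℚ) = 4*(u:ℚ)-1 := by
    rw [Nat.cast_sub (by omega : 1 ≤ 4*u)]; push_cast; ring
  have hc6 : ((4*u+2*q-1 : ℕ) : ℚ) = 4*(u:ℚ)+2*(q:ℚ)-1 := by
    rw [Nat.cast_sub (by omega : 1 ≤ 4*u+2*q)]; push_cast; ring
  have hc7 : ((4*u-2*q-1 : ℕ) : ℚ) = 4*(u:ℚ)-2*(q:ℚ)-1 := by
    rw [Nat.cast_sub (by omega : 1 ≤ 4*u-2*q), Nat.cast_sub (by omega : 2*q ≤ 4*u)]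
    push_cast; ring
  push_cast
  simp only [hc7, hc6, hc5, hc4, hc3, hc1]
  field_simp
  subst hu
  push_cast
  ring

lemma dot_def {nn : ℕ} (x v : Fin nn → ZMod 2) : dot x v = ∑ i, x i * v i := rfl

open Classical in
lemma nat_card_subtype {α : Type*} [Fintype α] (p : α → Prop) :
    Nat.card {x // p x} = (univ.filter p).card := by
  rw [Nat.card_eq_fintype_card]
  convert Fintype.card_subtype p

end APN

lemma Rpos (x : ℤ) (hx : 4 ≤ x) : 0 < 64*x^3 - 88*x^2 + 26*x - 2 := by nlinarith

open Finset APN in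
open Classical in
/-- Let m ≥ 5 be odd and C a binary [2^m−1, 2^m−1−2m] code whose dual has weight
enumerator 1 + a·z^(2^(m-1)-2^((m-1)/2)) + b·z^(2^(m-1)) + c·z^(2^(m-1)+2^((m-1)/2)),
with a = (2^m−1)(2^((m-1)/2)+1)2^((m-3)/2), b = (2^m−1)(2^(m-1)+1),
c = (2^m−1)(2^((m-1)/2)−1)2^((m-3)/2). Then A₁ = A₂ = A₃ = A₄ = 0,
A₅ = (4·2^(3m-5) − 22·2^(2m-4) + 26·2^(m-3) − 2)/15 > 0, and C has minimum distance 5. -/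
theorem apn_code_min_distance_five (m : ℕ) (hm : 5 ≤ m) (hodd : Odd m)
    (C : Submodule (ZMod 2) (Fin (2 ^ m - 1) → ZMod 2))
    (hdim : Nat.card C = 2 ^ (2 ^ m - 1 - 2 * m))
    (hdual : ∀ w : ℕ,
      Nat.card {x : Fin (2 ^ m - 1) → ZMod 2 //
          (∀ c ∈ C, ∑ i, x i * c i = 0) ∧
          (Finset.univ.filter (fun i => x i ≠ 0)).card = w} =
        if w = 0 then 1
        else if w = 2 ^ (m - 1) - 2 ^ ((m - 1) / 2) then
          (2 ^ m - 1) * (2 ^ ((m - 1) / 2) + 1) * 2 ^ ((m - 3) / 2)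
        else if w = 2 ^ (m - 1) then (2 ^ m - 1) * (2 ^ (m - 1) + 1)
        else if w = 2 ^ (m - 1) + 2 ^ ((m - 1) / 2) then
          (2 ^ m - 1) * (2 ^ ((m - 1) / 2) - 1) * 2 ^ ((m - 3) / 2)
        else 0) :
    (∀ w : ℕ, 1 ≤ w → w ≤ 4 →
      Nat.card {c : Fin (2 ^ m - 1) → ZMod 2 // c ∈ C ∧
        (Finset.univ.filter (fun i => c i ≠ 0)).card = w} = 0) ∧
    (15 * Nat.card {c : Fin (2 ^ m - 1) → ZMod 2 // c ∈ C ∧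
        (Finset.univ.filter (fun i => c i ≠ 0)).card = 5} : ℤ) =
      4 * 2 ^ (3 * m - 5) - 22 * 2 ^ (2 * m - 4) + 26 * 2 ^ (m - 3) - 2 ∧
    0 < Nat.card {c : Fin (2 ^ m - 1) → ZMod 2 // c ∈ C ∧
        (Finset.univ.filter (fun i => c i ≠ 0)).card = 5} ∧
    (∀ c ∈ C, c ≠ 0 → 5 ≤ (Finset.univ.filter (fun i => c i ≠ 0)).card) := by
  -- setup
  obtain ⟨t, ht⟩ := hodd
  have ht2 : 2 ≤ t := by omega
  obtain ⟨q, hqdef⟩ : ∃ q, 2 ^ (t - 1) = q := ⟨_, rfl⟩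
  obtain ⟨u, hu⟩ : ∃ u, q * q = u := ⟨_, rfl⟩
  have hq : 2 ≤ q := by
    rw [← hqdef]
    calc 2 = 2 ^ 1 := rfl
    _ ≤ 2 ^ (t - 1) := Nat.pow_le_pow_right (by norm_num) (by omega)
  have hu2 : 2 * q ≤ u := by nlinarith
  have hu4 : 4 ≤ u := by nlinarith
  have h2t : (2:ℕ) ^ t = 2 * q := by
    rw [show t = (t-1) + 1 by omega, pow_succ, hqdef]; ring
  have hpm : (2:ℕ) ^ m = 8 * u := by
    rw [ht, show 2*t+1 = t + (t+1) by ring, pow_add, pow_succ, h2t, ← hu]; ring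
  have hm1 : (2:ℕ) ^ (m - 1) = 4 * u := by
    rw [show m - 1 = t + t by omega, pow_add, h2t, ← hu]; ring
  have hth : (2:ℕ) ^ ((m - 1) / 2) = 2 * q := by
    rw [show (m-1)/2 = t by omega, h2t]
  have hq3 : (2:ℕ) ^ ((m - 3) / 2) = q := by
    rw [show (m-3)/2 = t - 1 by omega, hqdef]
  have hn : (2:ℕ) ^ m - 1 = 8 * u - 1 := by rw [hpm]
  have he3 : 3*m-5 = (t-1)*6+4 := by omega
  have he2 : 2*m-4 = (t-1)*4+2 := by omega
  have he1 : m-3 = (t-1)*2 := by omega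
  have hnn1 : (2:ℕ) ^ m - 1 + 1 = 8 * u := by
    rw [hn]; omega
  -- fiber cards of the dual code
  have hfib : ∀ w : ℕ, (((univ.filter (· ∈ dualM C)).filter
        (fun x : Fin (2 ^ m - 1) → ZMod 2 => (supp x).card = w)).card)
      = (if w = 0 then 1
         else if w = 4*u-2*q then (8*u-1)*(2*q+1)*q
         else if w = 4*u then (8*u-1)*(4*u+1)
         else if w = 4*u+2*q then (8*u-1)*(2*q-1)*q
         else 0) := by
    intro w
    have hLHS : ((univ.filter (· ∈ dualM C)).filter
            (fun x : Fin (2 ^ m - 1) → ZMod 2 => (supp x).card = w)).card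
        = Nat.card {x : Fin (2 ^ m - 1) → ZMod 2 //
          (∀ c ∈ C, ∑ i, x i * c i = 0) ∧ (univ.filter (fun i => x i ≠ 0)).card = w} := by
      rw [nat_card_subtype, Finset.filter_filter]
      apply congrArg Finset.card
      refine Finset.ext (fun x => ?_)
      simp only [Finset.mem_filter]
      simp only [Finset.mem_filter, Finset.mem_univ, true_and, supp]
      constructor
      · rintro ⟨h1, h2⟩
        exact ⟨fun c hc => by rw [← dot_def x c, dot_comm]; exact mem_dualM.mp h1 c hc, h2⟩
      · rintro ⟨h1, h2⟩
        exact ⟨mem_dualM.mpr (fun c hc => by rw [dot_comm, dot_def]; exact h1 c hc), h2⟩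
    rw [hLHS, hdual w, hm1, hth, hq3, hpm]
  -- the 4-element support-weight set
  have hS4zero : ∀ x ∈ Finset.range (2 ^ m - 1 + 1),
      x ∉ ({0, 4*u-2*q, 4*u, 4*u+2*q} : Finset ℕ) →
      ((if x = 0 then 1
         else if x = 4*u-2*q then (8*u-1)*(2*q+1)*q
         else if x = 4*u then (8*u-1)*(4*u+1)
         else if x = 4*u+2*q then (8*u-1)*(2*q-1)*q
         else 0 : ℕ) : ℤ) = 0 := by
    intro x _ hx
    simp only [Finset.mem_insert, Finset.mem_singleton, not_or] at hx
    rw [if_neg hx.1, if_neg hx.2.1, if_neg hx.2.2.1, if_neg hx.2.2.2]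
    rfl
  have hS4sub : ({0, 4*u-2*q, 4*u, 4*u+2*q} : Finset ℕ) ⊆ Finset.range (2 ^ m - 1 + 1) := by
    intro x hx
    simp only [Finset.mem_insert, Finset.mem_singleton] at hx
    rw [Finset.mem_range, hnn1]
    rcases hx with h|h|h|h <;> omega
  -- master summation identity
  have hsum4 : ∀ f : ℕ → ℤ,
      ∑ x ∈ univ.filter (· ∈ dualM C), f ((supp x).card)
        = f 0 + ((8*u-1)*(2*q+1)*q : ℕ) * f (4*u-2*q)
            + ((8*u-1)*(4*u+1) : ℕ) * f (4*u)
            + ((8*u-1)*(2*q-1)*q : ℕ) * f (4*u+2*q) := by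
    intro f
    rw [sum_fiber_wt]
    rw [Finset.sum_congr rfl (fun s _ => by rw [hfib s])]
    rw [← Finset.sum_subset hS4sub (fun x hx1 hx2 => by rw [hS4zero x hx1 hx2, zero_mul])]
    have d1 : (0:ℕ) ∉ ({4*u-2*q, 4*u, 4*u+2*q} : Finset ℕ) := by
      simp only [Finset.mem_insert, Finset.mem_singleton]; omega
    have d2 : (4*u-2*q) ∉ ({4*u, 4*u+2*q} : Finset ℕ) := by
      simp only [Finset.mem_insert, Finset.mem_singleton]; omega
    have d3 : (4*u) ∉ ({4*u+2*q} : Finset ℕ) := by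
      simp only [Finset.mem_singleton]; omega
    rw [Finset.sum_insert d1, Finset.sum_insert d2, Finset.sum_insert d3,
      Finset.sum_singleton]
    rw [if_pos rfl, if_neg (by omega), if_pos rfl, if_neg (by omega), if_neg (by omega),
      if_pos rfl, if_neg (by omega), if_neg (by omega), if_neg (by omega), if_pos rfl]
    push_cast
    ring
  -- cardinality of the dual code
  have hDF : ((univ.filter (· ∈ dualM C)).card : ℤ) = 64 * (u:ℤ)^2 := by
    have h1 := hsum4 (fun _ => (1:ℤ))
    simp only [mul_one] at h1
    rw [Finset.sum_const, nsmul_eq_mul, mul_one] at h1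
    rw [h1]
    have h8 : (1:ℕ) ≤ 8*u := by omega
    have h2q : (1:ℕ) ≤ 2*q := by omega
    push_cast [Nat.cast_sub h8, Nat.cast_sub h2q]
    rw [← hu]
    push_cast
    ring
  -- |DF| as a power of two
  have hDF2 : ((univ.filter (· ∈ dualM C)).card : ℤ) = 2 ^ (2*m) := by
    rw [hDF, mul_comm 2 m, pow_mul]
    have : ((2:ℤ))^m = ((2^m : ℕ) : ℤ) := by push_cast; ring
    rw [this, hpm]
    push_cast
    ring
  have hP : m - 2 < 2^(m-2) := Nat.lt_two_pow_self
  have hsplit : (2:ℕ)^m = 2^(m-2)*4 := by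
    rw [show m = (m-2)+2 by omega, pow_add]
    norm_num
  have hmn : 2*m ≤ 2^m - 1 := by omega
  have hCFn : (univ.filter (· ∈ C)).card = 2^(2^m - 1 - 2*m) := by
    rw [← nat_card_subtype (· ∈ C)]
    exact hdim
  have hkey := card_dual_mul (dualM C)
  have h64 : (64 * (u:ℤ)^2) ≠ 0 := by positivity
  have hdd : ((univ.filter (· ∈ dualM (dualM C))).card : ℤ)
      = ((univ.filter (· ∈ C)).card : ℤ) := by
    rw [hDF2] at hkey
    have h2 : ((univ.filter (· ∈ C)).card : ℤ) * 2^(2*m) = 2^(2^m - 1) := by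
      rw [hCFn]
      push_cast
      rw [← pow_add]
      congr 1
      omega
    have h3 := hkey.trans h2.symm
    exact mul_right_cancel₀ (by positivity) h3
  have hCD : (univ.filter (· ∈ C)) = (univ.filter (· ∈ dualM (dualM C))) := by
    apply Finset.eq_of_subset_of_card_le
    · intro x hx
      simp only [Finset.mem_filter, Finset.mem_univ, true_and] at hx ⊢
      exact mem_dualM.mpr (fun c hc => by rw [dot_comm]; exact mem_dualM.mp hc x hx)
    · exact le_of_eq (by exact_mod_cast hdd)
  have hmemC : ∀ v : Fin (2^m - 1) → ZMod 2, (v ∈ dualM (dualM C) ↔ v ∈ C) := by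
    intro v
    have h1 := Finset.ext_iff.mp hCD v
    simp only [Finset.mem_filter, Finset.mem_univ, true_and] at h1
    exact h1.symm
  -- the master counting identity
  have hcount : ∀ w : ℕ,
      (64 * (u:ℤ)^2) * (Nat.card {c : Fin (2^m - 1) → ZMod 2 // c ∈ C ∧
          (univ.filter (fun i => c i ≠ 0)).card = w} : ℤ)
      = Kr (8*u-1) w 0 + ((8*u-1)*(2*q+1)*q : ℕ) * Kr (8*u-1) w (4*u-2*q)
        + ((8*u-1)*(4*u+1) : ℕ) * Kr (8*u-1) w (4*u)
        + ((8*u-1)*(2*q-1)*q : ℕ) * Kr (8*u-1) w (4*u+2*q) := by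
    intro w
    have h1 := main_count (dualM C) w
    have h2 : ∑ x ∈ univ.filter (· ∈ dualM C), ∑ j ∈ Finset.range (w + 1),
          (-1 : ℤ) ^ j * (((supp x).card.choose j) : ℤ) *
            (((2^m - 1 - (supp x).card).choose (w - j)) : ℤ)
        = ∑ x ∈ univ.filter (· ∈ dualM C), Kr (2^m - 1) w ((supp x).card) := rfl
    rw [h2, hsum4 (Kr (2^m - 1) w)] at h1
    have hKr : ∀ s : ℕ, Kr (2^m - 1) w s = Kr (8*u-1) w s := fun s => by rw [hn]
    rw [hKr 0, hKr (4*u-2*q), hKr (4*u), hKr (4*u+2*q)] at h1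
    rw [hDF] at h1
    have h3 : ((univ.filter (fun v : Fin (2^m - 1) → ZMod 2 =>
          v ∈ dualM (dualM C) ∧ (supp v).card = w)).card)
        = Nat.card {c : Fin (2^m - 1) → ZMod 2 // c ∈ C ∧
            (univ.filter (fun i => c i ≠ 0)).card = w} := by
      rw [nat_card_subtype]
      apply congrArg Finset.card
      refine Finset.ext (fun v => ?_)
      simp only [Finset.mem_filter]
      simp only [Finset.mem_filter, Finset.mem_univ, true_and, supp]
      exact ⟨fun ⟨ha, hb⟩ => ⟨(hmemC v).mp ha, hb⟩, fun ⟨ha, hb⟩ => ⟨(hmemC v).mpr ha, hb⟩⟩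
    rw [h3] at h1
    exact h1
  -- vanishing for weights 1..4
  have hzero : ∀ w : ℕ, 1 ≤ w → w ≤ 4 →
      Nat.card {c : Fin (2^m - 1) → ZMod 2 // c ∈ C ∧
        (univ.filter (fun i => c i ≠ 0)).card = w} = 0 := by
    intro w hw1 hw4
    have h1 := hcount w
    have hres : (64 * (u:ℤ)^2) * (Nat.card {c : Fin (2^m - 1) → ZMod 2 // c ∈ C ∧
        (univ.filter (fun i => c i ≠ 0)).card = w} : ℤ) = 0 := by
      interval_cases w
      · exact h1.trans (sig1 q u hq hu)
      · exact h1.trans (sig2 q u hq hu)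
      · exact h1.trans (sig3 q u hq hu)
      · exact h1.trans (sig4 q u hq hu)
    have := (mul_eq_zero.mp hres).resolve_left h64
    exact_mod_cast this
  -- weight-5 count
  have h15 : (15:ℤ) * (Nat.card {c : Fin (2^m - 1) → ZMod 2 // c ∈ C ∧
        (univ.filter (fun i => c i ≠ 0)).card = 5} : ℤ)
      = 64*(u:ℤ)^3 - 88*(u:ℤ)^2 + 26*(u:ℤ) - 2 := by
    have h1 := hcount 5
    have h5 := sig5 q u hq hu
    have h6 : (64 * (u:ℤ)^2) * (15 * (Nat.card {c : Fin (2^m - 1) → ZMod 2 // c ∈ C ∧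
        (univ.filter (fun i => c i ≠ 0)).card = 5} : ℤ))
        = (64 * (u:ℤ)^2) * (64*(u:ℤ)^3 - 88*(u:ℤ)^2 + 26*(u:ℤ) - 2) := by
      linear_combination (15:ℤ) * h1 + h5
    exact mul_left_cancel₀ h64 h6
  have hp3 : ((2:ℤ))^(3*m-5) = 16*(u:ℤ)^3 := by
    have hn3 : (2:ℕ)^(3*m-5) = 16*u^3 := by
      rw [he3, pow_add, pow_mul, hqdef, ← hu]
      ring
    exact_mod_cast hn3
  have hp2 : ((2:ℤ))^(2*m-4) = 4*(u:ℤ)^2 := by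
    have hn2 : (2:ℕ)^(2*m-4) = 4*u^2 := by
      rw [he2, pow_add, pow_mul, hqdef, ← hu]
      ring
    exact_mod_cast hn2
  have hp1 : ((2:ℤ))^(m-3) = (u:ℤ) := by
    have hn1 : (2:ℕ)^(m-3) = u := by
      rw [he1, pow_mul, hqdef, ← hu]
      ring
    exact_mod_cast hn1
  have hpos : 0 < Nat.card {c : Fin (2^m - 1) → ZMod 2 // c ∈ C ∧
      (univ.filter (fun i => c i ≠ 0)).card = 5} := by
    have hupos : (4:ℤ) ≤ (u:ℤ) := by exact_mod_cast hu4
    have hRpos : (0:ℤ) < 64*(u:ℤ)^3 - 88*(u:ℤ)^2 + 26*(u:ℤ) - 2 := Rpos _ hupos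
    obtain ⟨N5, hN5⟩ : ∃ N, Nat.card {c : Fin (2^m - 1) → ZMod 2 // c ∈ C ∧
        (univ.filter (fun i => c i ≠ 0)).card = 5} = N := ⟨_, rfl⟩
    rw [hN5] at h15 ⊢
    have h0 : (0:ℤ) < 15 * (N5:ℤ) := h15 ▸ hRpos
    have h1 : (0:ℤ) < (N5:ℤ) := by linarith
    exact_mod_cast h1
  refine ⟨hzero, ?_, hpos, ?_⟩
  · rw [hp3, hp2, hp1, h15]
    ring
  · intro c hcC hc0
    by_contra hlt
    push_neg at hlt
    have hw1 : 1 ≤ (univ.filter (fun i => c i ≠ 0)).card := by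
      rcases Nat.eq_zero_or_pos (univ.filter (fun i => c i ≠ 0)).card with h|h
      · exfalso
        apply hc0
        funext i
        have h2 := Finset.card_eq_zero.mp h
        have h3 := Finset.eq_empty_iff_forall_notMem.mp h2 i
        simp only [Finset.mem_filter, Finset.mem_univ, true_and, not_not] at h3
        exact h3
      · exact h
    have hcard0 := hzero _ hw1 (Nat.lt_succ_iff.mp hlt)
    have hne : Nonempty {c' : Fin (2^m - 1) → ZMod 2 // c' ∈ C ∧
        (univ.filter (fun i => c' i ≠ 0)).card = (univ.filter (fun i => c i ≠ 0)).card} :=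
      ⟨⟨c, hcC, rfl⟩⟩
    haveI := hne
    have hgt := Nat.card_pos (α := {c' : Fin (2^m - 1) → ZMod 2 // c' ∈ C ∧
        (univ.filter (fun i => c' i ≠ 0)).card = (univ.filter (fun i => c i ≠ 0)).card})
    rw [hcard0] at hgt
    exact lt_irrefl 0 hgt
end
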